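/- arXiv:2306.15370 — 5 statements merged into one kernel-verified Lean document; each statement's English description precedes it below -/
import Mathlib

section
/- For every group Γ with a finite generating set S, there exist a constant c > 0 and N ∈ ℕ such that for all n ≥ N there exists a nontrivial element w ∈ Γ∗⟨x⟩ with |w|_{S∪{x}} ≤ n satisfying w(g) = e for every g ∈ Γ with |g|_S < c·log(n). (Equivalently, the MIF growth function satisfies M_Γ^S(n) ≥ c·log(n) for all large n.) -/
open scoped Classical

/-- Word length of `g` with respect to generating set `S` (letters from `S ∪ S⁻¹`). -/
noncomputable def wordLength {G : Type*} [Group G] (S : Set G) (g : G) : ℕ :=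
  sInf {m | ∃ l : List G, l.length = m ∧ (∀ a ∈ l, a ∈ S ∨ a⁻¹ ∈ S) ∧ l.prod = g}

/-- The free product `G ∗ ⟨x⟩`. -/
abbrev FPZ (G : Type*) [Group G] := Monoid.Coprod G (Multiplicative ℤ)

/-- The stable letter `x` raised to the power `m`. -/
def xpow (G : Type*) [Group G] (m : ℤ) : FPZ G :=
  Monoid.Coprod.inr (Multiplicative.ofAdd m)

/-- Evaluation of words with constants: the unique hom `G ∗ ⟨x⟩ → G` restricting to
the identity on `G` and sending `x` to `g`. -/
def wordEval {G : Type*} [Group G] (g : G) : FPZ G →* G :=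
  Monoid.Coprod.lift (MonoidHom.id G) (zpowersHom G g)

/-- The generating set `S ∪ {x}` of `G ∗ ⟨x⟩`. -/
def genSet {G : Type*} [Group G] (S : Set G) : Set (FPZ G) :=
  ((Monoid.Coprod.inl : G →* FPZ G) '' S) ∪ {xpow G 1}

/-!
Fix `m` and list the nontrivial elements `f₀, f₁, …` of the word ball of radius `m`; there are
at most `K ^ m` of them, `K = 2 |S| + 1`. Put them at the leaves `x ⁅x, fᵢ⁆ x⁻¹` of a balanced
binary tree of depth `D ≈ log₂ (K ^ m)` whose inner nodes are commutators `⁅x^c A x^(-c), B⁆`.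
Evaluated at `g = fᵢ` the leaf for `fᵢ` becomes trivial, and a commutator with a trivial entry is
trivial, so the root vanishes on the whole ball. Its length is `16 ^ D · O(m) = K ^ O(m)`, which
allows `m ≍ log n`. The root is nontrivial in `Γ ∗ ⟨x⟩` because, with `c` large, every node is a
reduced word `x^s m x^(-t)` and the commutator of two such words does not cancel at any junction.
-/

universe u

open scoped Pointwise commutatorElement

section WordBall

variable {G H : Type*} [Group G] [Group H] {S : Set G}

def wordBall (S : Set G) (n : ℕ) : Set G := insert 1 (S ∪ S⁻¹) ^ n

theorem wordBall_mono {m n : ℕ} (h : m ≤ n) : wordBall S m ⊆ wordBall S n :=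
  Set.pow_subset_pow_right (Set.mem_insert 1 _) h

theorem mul_mem_wordBall {a b : G} {m n : ℕ} (ha : a ∈ wordBall S m) (hb : b ∈ wordBall S n) :
    a * b ∈ wordBall S (m + n) := by
  rw [wordBall, pow_add]
  exact Set.mul_mem_mul ha hb

theorem inv_mem_wordBall {a : G} {n : ℕ} (ha : a ∈ wordBall S n) : a⁻¹ ∈ wordBall S n := by
  have hsymm : (insert 1 (S ∪ S⁻¹))⁻¹ = insert (1 : G) (S ∪ S⁻¹) := by
    rw [Set.inv_insert, inv_one, Set.union_inv, inv_inv, Set.union_comm]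
  rw [wordBall, ← hsymm, inv_pow]
  exact Set.inv_mem_inv.2 ha

theorem commutatorElement_mem_wordBall {a b : G} {m n : ℕ} (ha : a ∈ wordBall S m)
    (hb : b ∈ wordBall S n) : ⁅a, b⁆ ∈ wordBall S (2 * (m + n)) := by
  rw [commutatorElement_def, show 2 * (m + n) = m + n + m + n by ring]
  exact mul_mem_wordBall (mul_mem_wordBall (mul_mem_wordBall ha hb) (inv_mem_wordBall ha))
    (inv_mem_wordBall hb)

theorem pow_mem_wordBall {a : G} (ha : a ∈ S) (n : ℕ) : a ^ n ∈ wordBall S n :=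
  Set.pow_mem_pow (Set.mem_insert_of_mem _ (Or.inl ha))

theorem map_mem_wordBall {T : Set H} (f : G →* H) (hf : Set.MapsTo f S T) {a : G} {n : ℕ}
    (ha : a ∈ wordBall S n) : f a ∈ wordBall T n := by
  have hgen : f '' insert 1 (S ∪ S⁻¹) ⊆ insert 1 (T ∪ T⁻¹) := by
    rintro _ ⟨b, rfl | hb | hb, rfl⟩
    · exact Or.inl (map_one f)
    · exact Or.inr (Or.inl (hf hb))
    · exact Or.inr (Or.inr (by simpa [← map_inv] using hf hb))
  rw [wordBall] at ha ⊢
  exact Set.pow_subset_pow_left hgen (Set.image_pow f _ n ▸ Set.mem_image_of_mem f ha)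

theorem list_prod_mem_wordBall {l : List G} (hl : ∀ a ∈ l, a ∈ S ∨ a⁻¹ ∈ S) :
    l.prod ∈ wordBall S l.length := by
  induction l with
  | nil => exact Set.one_mem_one
  | cons a l ih =>
    rw [List.prod_cons, List.length_cons, wordBall, pow_succ']
    exact Set.mul_mem_mul (Set.mem_insert_of_mem _ (hl a List.mem_cons_self))
      (ih fun b hb => hl b (List.mem_cons_of_mem a hb))

theorem exists_list_of_mem_wordBall {g : G} {n : ℕ} (hg : g ∈ wordBall S n) :
    ∃ l : List G, l.length ≤ n ∧ (∀ a ∈ l, a ∈ S ∨ a⁻¹ ∈ S) ∧ l.prod = g := by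
  induction n generalizing g with
  | zero => exact ⟨[], le_rfl, by simp, (Set.mem_one.1 hg).symm⟩
  | succ n ih =>
    rw [wordBall, pow_succ'] at hg
    obtain ⟨a, ha, u, hu, rfl⟩ := hg
    obtain ⟨l, hlen, hl, rfl⟩ := ih hu
    rcases ha with rfl | ha
    · exact ⟨l, by omega, hl, (one_mul _).symm⟩
    · refine ⟨a :: l, by simpa using hlen, ?_, List.prod_cons⟩
      simpa only [List.forall_mem_cons] using ⟨ha, hl⟩

theorem wordLength_le_of_mem_wordBall {g : G} {n : ℕ} (hg : g ∈ wordBall S n) :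
    wordLength S g ≤ n := by
  obtain ⟨l, hlen, hl, hprod⟩ := exists_list_of_mem_wordBall hg
  exact (Nat.sInf_le (Set.mem_ofPred.2 ⟨l, rfl, hl, hprod⟩)).trans hlen

theorem mem_wordBall_of_wordLength_le (hS : Subgroup.closure S = ⊤) {g : G} {n : ℕ}
    (hg : wordLength S g ≤ n) : g ∈ wordBall S n := by
  have hmem : g ∈ Submonoid.closure (S ∪ S⁻¹) := by
    rw [← Subgroup.closure_toSubmonoid, hS]
    exact Subgroup.mem_top g
  obtain ⟨l, hl, hprod⟩ := Submonoid.exists_list_of_mem_closure hmem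
  -- `wordLength S g` is an `sInf`, attained since the set of lengths is nonempty
  have hne : {m | ∃ l : List G, l.length = m ∧ (∀ a ∈ l, a ∈ S ∨ a⁻¹ ∈ S) ∧ l.prod = g}.Nonempty :=
    ⟨_, l, rfl, hl, hprod⟩
  obtain ⟨l', hlen, hl', rfl⟩ := Nat.sInf_mem hne
  exact wordBall_mono (hlen.trans_le hg) (list_prod_mem_wordBall hl')

theorem coe_wordBall_finset (T : Finset G) (n : ℕ) :
    wordBall (T : Set G) n = ↑(insert 1 (T ∪ T⁻¹) ^ n) := by
  simp [wordBall]

theorem card_insert_one_union_inv_le (T : Finset G) :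
    (insert 1 (T ∪ T⁻¹)).card ≤ 2 * T.card + 1 :=
  calc (insert 1 (T ∪ T⁻¹)).card ≤ (T ∪ T⁻¹).card + 1 := Finset.card_insert_le _ _
    _ ≤ T.card + T⁻¹.card + 1 := by gcongr; exact Finset.card_union_le _ _
    _ = 2 * T.card + 1 := by rw [Finset.card_inv]; ring

end WordBall

section ReducedWords

variable {G : Type u} [Group G]

-- Reduced words (`Monoid.CoprodI.NeWord`) exist for indexed free products, so `G ∗ ⟨x⟩` is
-- mapped to the free product of this `Bool`-indexed family (`ULift` moves `ℤ` to the universe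
-- of `G`).
abbrev FreeFactor (G : Type u) [Group G] : Bool → Type u :=
  fun b => cond b G (ULift (Multiplicative ℤ))

instance : ∀ b, Group (FreeFactor G b)
  | true => inferInstanceAs (Group G)
  | false => inferInstanceAs (Group (ULift (Multiplicative ℤ)))

open Monoid.CoprodI

def toCoprodI : FPZ G →* Monoid.CoprodI (FreeFactor G) :=
  Monoid.Coprod.lift (of : FreeFactor G true →* _)
    ((of : FreeFactor G false →* _).comp MulEquiv.ulift.symm.toMonoidHom)

def xLetter (z : ℤ) : FreeFactor G false := ULift.up (Multiplicative.ofAdd z)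

theorem xLetter_ne_one {z : ℤ} (hz : z ≠ 0) : xLetter (G := G) z ≠ 1 := fun h =>
  hz (by simpa [xLetter] using congrArg ULift.down h)

theorem toCoprodI_inl (g : G) : toCoprodI (Monoid.Coprod.inl g) = of (i := true) g :=
  Monoid.Coprod.lift_apply_inl (M := G) _ _ _

theorem toCoprodI_zpow_xpow_one (z : ℤ) :
    toCoprodI (xpow G 1 ^ z) = of (xLetter (G := G) z) := by
  rw [map_zpow, toCoprodI, xpow, Monoid.Coprod.lift_apply_inr, ← map_zpow, MonoidHom.comp_apply]
  congr 1
  apply ULift.ext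
  change Multiplicative.ofAdd (1 : ℤ) ^ z = Multiplicative.ofAdd z
  rw [← ofAdd_zsmul, smul_eq_mul, mul_one]

theorem Monoid.CoprodI.NeWord.prod_ne_one {ι : Type*} {M : ι → Type*} [∀ i, Monoid (M i)] {i j : ι}
    (w : NeWord M i j) : w.prod ≠ 1 := fun h => by
  have hempty : w.toWord = Word.empty :=
    Word.equiv.symm.injective (h.trans Word.prod_empty.symm : w.toWord.prod = Word.empty.prod)
  exact w.toList_ne_nil (congrArg Word.toList hempty)

-- `m` is a nonempty reduced word whose first and last letters lie in `G`.
def IsCoreWord (m : FPZ G) : Prop :=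
  ∃ w : NeWord (FreeFactor G) true true, toCoprodI m = w.prod

theorem isCoreWord_inl {g : G} (hg : g ≠ 1) : IsCoreWord (Monoid.Coprod.inl g) :=
  ⟨NeWord.singleton (i := true) g hg, by rw [toCoprodI_inl, NeWord.prod_singleton]⟩

theorem IsCoreWord.inv {m : FPZ G} (hm : IsCoreWord m) : IsCoreWord m⁻¹ := by
  obtain ⟨w, hw⟩ := hm
  exact ⟨w.inv, by rw [map_inv, hw, NeWord.inv_prod]⟩

theorem IsCoreWord.mul_zpow_mul {m m' : FPZ G} (hm : IsCoreWord m) {z : ℤ} (hz : z ≠ 0)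
    (hm' : IsCoreWord m') : IsCoreWord (m * xpow G 1 ^ z * m') := by
  obtain ⟨w, hw⟩ := hm
  obtain ⟨w', hw'⟩ := hm'
  refine ⟨(w.append (by decide) (NeWord.singleton _ (xLetter_ne_one hz))).append
    (by decide) w', ?_⟩
  simp [hw, hw', toCoprodI_zpow_xpow_one]

theorem IsCoreWord.zpow_mul_zpow_ne_one {m : FPZ G} (hm : IsCoreWord m) {s t : ℤ} (hs : s ≠ 0)
    (ht : t ≠ 0) : xpow G 1 ^ s * m * xpow G 1 ^ t ≠ 1 := by
  obtain ⟨w, hw⟩ := hm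
  intro h
  refine (((NeWord.singleton _ (xLetter_ne_one hs)).append (by decide) w).append
    (by decide) (NeWord.singleton _ (xLetter_ne_one ht))).prod_ne_one ?_
  simpa [hw, toCoprodI_zpow_xpow_one] using congrArg toCoprodI h

end ReducedWords

section CommutatorTree

variable {G : Type u} [Group G]

def IsSandwich (N : ℕ) (w : FPZ G) : Prop :=
  ∃ s t : ℤ, 0 < s ∧ s < N ∧ 0 < t ∧ t < N ∧
    ∃ m, IsCoreWord m ∧ w = xpow G 1 ^ s * m * xpow G 1 ^ (-t)

theorem IsSandwich.ne_one {N : ℕ} {w : FPZ G} (hw : IsSandwich N w) : w ≠ 1 := by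
  obtain ⟨s, t, hs, -, ht, -, m, hm, rfl⟩ := hw
  exact hm.zpow_mul_zpow_ne_one hs.ne' (neg_ne_zero.2 ht.ne')

theorem isSandwich_leaf {g : G} (hg : g ≠ 1) :
    IsSandwich 3 (xpow G 1 * ⁅xpow G 1, Monoid.Coprod.inl g⁆ * (xpow G 1)⁻¹) := by
  refine ⟨2, 1, by norm_num, by norm_num, by norm_num, by norm_num, _,
    (isCoreWord_inl hg).mul_zpow_mul (z := -1) (by norm_num) (isCoreWord_inl (inv_ne_one.2 hg)),
    ?_⟩
  rw [commutatorElement_def, map_inv]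
  group
  rw [zpow_two]

-- For `A = x^s m x^(-t)` and `B = x^u m' x^(-v)` with `s, t, u, v ∈ (0, N)`, the powers of `x`
-- at the junctions of the commutator are `N + s`, `u - t - N`, `N + t - v`, `v - s - N`, `-u`:
-- none vanishes, so nothing cancels.
theorem IsSandwich.commutatorElement {N : ℕ} {A B : FPZ G} (hA : IsSandwich N A)
    (hB : IsSandwich N B) :
    IsSandwich (2 * N) ⁅xpow G 1 ^ N * A * (xpow G 1 ^ N)⁻¹, B⁆ := by
  obtain ⟨s, t, hs, hsN, ht, htN, m, hm, rfl⟩ := hA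
  obtain ⟨u, v, hu, huN, hv, hvN, m', hm', rfl⟩ := hB
  refine ⟨N + s, u, by omega, by push_cast; omega, hu, by push_cast; omega,
    m * xpow G 1 ^ (u - t - N) * m' * xpow G 1 ^ (N + t - v) * m⁻¹ * xpow G 1 ^ (v - s - N) * m'⁻¹,
    ((hm.mul_zpow_mul (by omega) hm').mul_zpow_mul (by omega) hm.inv).mul_zpow_mul (by omega)
      hm'.inv, ?_⟩
  rw [commutatorElement_def]
  group

-- `3 * 2 ^ d` is the sandwich width of the trees of depth `d`.
def commTree : ℕ → (ℕ → G) → FPZ G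
  | 0, f => xpow G 1 * ⁅xpow G 1, Monoid.Coprod.inl (f 0)⁆ * (xpow G 1)⁻¹
  | d + 1, f =>
    ⁅xpow G 1 ^ (3 * 2 ^ d) * commTree d (fun i => f (2 * i)) * (xpow G 1 ^ (3 * 2 ^ d))⁻¹,
      commTree d (fun i => f (2 * i + 1))⁆

theorem isSandwich_commTree (d : ℕ) {f : ℕ → G} (hf : ∀ i, f i ≠ 1) :
    IsSandwich (3 * 2 ^ d) (commTree d f) := by
  induction d generalizing f with
  | zero => exact isSandwich_leaf (hf 0)
  | succ d ih =>
    rw [pow_succ, ← mul_assoc, mul_comm _ 2, commTree]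
    exact (ih fun i => hf _).commutatorElement (ih fun i => hf _)

theorem wordEval_xpow_one (g : G) : wordEval g (xpow G 1) = g := by
  simp [wordEval, xpow]

theorem wordEval_inl (g h : G) : wordEval g (Monoid.Coprod.inl h) = h :=
  Monoid.Coprod.lift_apply_inl _ _ _

theorem wordEval_commTree_eq_one (d : ℕ) {f : ℕ → G} {g : G} {i : ℕ} (hi : i < 2 ^ d)
    (hgi : ⁅g, f i⁆ = 1) : wordEval g (commTree d f) = 1 := by
  induction d generalizing f i with
  | zero =>
    obtain rfl : i = 0 := by simpa using hi
    simp [commTree, map_commutatorElement, wordEval_xpow_one, wordEval_inl, hgi]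
  | succ d ih =>
    rw [commTree, map_commutatorElement, map_mul, map_mul]
    obtain ⟨j, rfl | rfl⟩ := Nat.even_or_odd' i
    · rw [ih (f := fun i => f (2 * i)) (by omega) hgi, mul_one, map_inv, mul_inv_cancel,
        commutatorElement_one_left]
    · rw [ih (f := fun i => f (2 * i + 1)) (by omega) hgi, commutatorElement_one_right]

theorem commTree_mem_wordBall (d : ℕ) {S : Set G} {f : ℕ → G} {m : ℕ}
    (hf : ∀ i, f i ∈ wordBall S m) :
    commTree d f ∈ wordBall (genSet S) ((2 * m + 4) * 16 ^ d) := by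
  have hx : xpow G 1 ∈ genSet S := Or.inr rfl
  have hinl : Set.MapsTo (Monoid.Coprod.inl : G →* FPZ G) S (genSet S) :=
    fun a ha => Or.inl ⟨a, ha, rfl⟩
  induction d generalizing f with
  | zero =>
    have hleaf := mul_mem_wordBall (mul_mem_wordBall (pow_mem_wordBall hx 1)
      (commutatorElement_mem_wordBall (pow_mem_wordBall hx 1) (map_mem_wordBall _ hinl (hf 0))))
      (inv_mem_wordBall (pow_mem_wordBall hx 1))
    simp only [pow_one] at hleaf
    exact wordBall_mono (by omega) hleaf
  | succ d ih =>
    have hc := pow_mem_wordBall hx (3 * 2 ^ d)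
    have hstep := commutatorElement_mem_wordBall
      (mul_mem_wordBall (mul_mem_wordBall hc (ih (f := fun i => f (2 * i)) fun i => hf _))
        (inv_mem_wordBall hc))
      (ih (f := fun i => f (2 * i + 1)) fun i => hf _)
    refine wordBall_mono ?_ hstep
    have h2 : 2 ^ d ≤ (2 * m + 4) * 16 ^ d :=
      (Nat.pow_le_pow_left (by norm_num) d).trans (Nat.le_mul_of_pos_left _ (by omega))
    rw [pow_succ]
    linarith

end CommutatorTree

section ShortMixedIdentities

variable {G : Type u} [Group G]

theorem Finset.exists_nat_enumeration {α : Type*} (F : Finset α) (hF : F.Nonempty) :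
    ∃ f : ℕ → α, (∀ i, f i ∈ F) ∧ ∀ a ∈ F, ∃ i < F.card, f i = a := by
  obtain ⟨a₀, ha₀⟩ := hF
  refine ⟨fun i => F.toList.getD i a₀, fun i => ?_, fun a ha => ?_⟩
  · change F.toList.getD i a₀ ∈ F
    rcases lt_or_ge i F.toList.length with hi | hi
    · rw [List.getD_eq_getElem _ _ hi]
      exact Finset.mem_toList.1 (List.getElem_mem hi)
    · rwa [List.getD_eq_default _ _ hi]
  · obtain ⟨i, hi, rfl⟩ := List.mem_iff_getElem.1 (Finset.mem_toList.2 ha)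
    exact ⟨i, by simpa using hi, List.getD_eq_getElem _ _ hi⟩

theorem exists_mixedIdentity_on_finset {S : Set G} {m : ℕ} (F : Finset G) (hF : F.Nonempty)
    (hF1 : ∀ g ∈ F, g ≠ 1) (hFm : ∀ g ∈ F, g ∈ wordBall S m) :
    ∃ w : FPZ G, w ≠ 1 ∧ w ∈ wordBall (genSet S) ((2 * m + 4) * (2 * F.card) ^ 4) ∧
      ∀ g, (g = 1 ∨ g ∈ F) → wordEval g w = 1 := by
  obtain ⟨f, hfF, hFf⟩ := F.exists_nat_enumeration hF
  set D := Nat.log 2 F.card + 1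
  have hcard : F.card < 2 ^ D := Nat.lt_pow_succ_log_self one_lt_two _
  have hD : 2 ^ D ≤ 2 * F.card := by
    rw [pow_succ, mul_comm]
    exact Nat.mul_le_mul_left 2 (Nat.pow_log_le_self 2 hF.card_pos.ne')
  refine ⟨commTree D f, (isSandwich_commTree D fun i => hF1 _ (hfF i)).ne_one,
    wordBall_mono ?_ (commTree_mem_wordBall D fun i => hFm _ (hfF i)), ?_⟩
  · calc (2 * m + 4) * 16 ^ D = (2 * m + 4) * (2 ^ D) ^ 4 := by
          rw [← pow_mul, mul_comm D, pow_mul]; norm_num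
      _ ≤ (2 * m + 4) * (2 * F.card) ^ 4 := by gcongr
  · rintro g (rfl | hg)
    · exact wordEval_commTree_eq_one D (i := 0) (by positivity) (commutatorElement_one_left _)
    · obtain ⟨i, hi, rfl⟩ := hFf g hg
      exact wordEval_commTree_eq_one D (hi.trans hcard) (commutatorElement_self _)

theorem mul_pow_four_le_pow {K m k : ℕ} (hK : 2 ≤ K) (hk : k ≤ (K - 1) ^ m) :
    (2 * m + 4) * (2 * k) ^ 4 ≤ K ^ (5 * m + 6) := by
  have hm : 2 * m + 4 ≤ K ^ (m + 2) := by
    have := Nat.lt_two_pow_self (n := m)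
    calc 2 * m + 4 ≤ 2 ^ (m + 2) := by rw [pow_add]; omega
      _ ≤ K ^ (m + 2) := Nat.pow_le_pow_left hK _
  have hk' : 2 * k ≤ K ^ (m + 1) := by
    calc 2 * k ≤ 2 * K ^ m := by gcongr; exact hk.trans (Nat.pow_le_pow_left (by omega) m)
      _ ≤ K ^ (m + 1) := by rw [pow_succ, mul_comm]; gcongr
  calc (2 * m + 4) * (2 * k) ^ 4 ≤ K ^ (m + 2) * (K ^ (m + 1)) ^ 4 := by gcongr
    _ = K ^ (5 * m + 6) := by rw [← pow_mul, ← pow_add]; ring_nf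

theorem xpow_one_ne_one : xpow G 1 ≠ 1 := fun h =>
  one_ne_zero (ofAdd_eq_one.1 (Monoid.Coprod.inr_injective (h.trans (map_one _).symm)))

theorem exists_mixedIdentity_of_wordLength_le (T : Finset G)
    (hT : Subgroup.closure (T : Set G) = ⊤) (m : ℕ) :
    ∃ w : FPZ G, w ≠ 1 ∧ wordLength (genSet (T : Set G)) w ≤ (2 * T.card + 2) ^ (5 * m + 6) ∧
      ∀ g, wordLength (T : Set G) g ≤ m → wordEval g w = 1 := by
  set B := insert 1 (T ∪ T⁻¹) ^ m
  have hB : ∀ g, wordLength (T : Set G) g ≤ m → g ∈ B := fun g hg => by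
    have := mem_wordBall_of_wordLength_le hT hg
    rwa [coe_wordBall_finset, Finset.mem_coe] at this
  rcases (B.erase 1).eq_empty_or_nonempty with hF | hF
  · refine ⟨xpow G 1, xpow_one_ne_one, ?_, fun g hg => ?_⟩
    · have hx : xpow G 1 ∈ wordBall (genSet (T : Set G)) 1 := by
        simpa using pow_mem_wordBall (S := genSet (T : Set G)) (Or.inr rfl) 1
      exact (wordLength_le_of_mem_wordBall hx).trans (Nat.one_le_pow _ _ (by omega))
    · obtain rfl : g = 1 := by
        by_contra hg1
        simpa [hF] using Finset.mem_erase.2 ⟨hg1, hB g hg⟩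
      rw [wordEval_xpow_one]
  · obtain ⟨w, hw1, hwB, hweval⟩ := exists_mixedIdentity_on_finset (B.erase 1) hF
      (fun g hg => (Finset.mem_erase.1 hg).1)
      (fun g hg => by rw [coe_wordBall_finset]; exact (Finset.mem_erase.1 hg).2)
    refine ⟨w, hw1, (wordLength_le_of_mem_wordBall hwB).trans ?_, fun g hg => hweval g ?_⟩
    · refine mul_pow_four_le_pow (by omega) ?_
      calc (B.erase 1).card ≤ B.card := Finset.card_erase_le
        _ ≤ (insert 1 (T ∪ T⁻¹)).card ^ m := Finset.card_pow_le
        _ ≤ (2 * T.card + 2 - 1) ^ m := by gcongr; exact card_insert_one_union_inv_le T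
    · by_cases hg1 : g = 1
      · exact Or.inl hg1
      · exact Or.inr (Finset.mem_erase.2 ⟨hg1, hB g hg⟩)

theorem le_natLog_of_lt_logb {K n k : ℕ} (h : (k : ℝ) < Real.logb K n) : k ≤ Nat.log K n := by
  have := Int.le_floor.2 h.le
  rw [Real.floor_logb_natCast (Nat.cast_nonneg n), Int.log_natCast] at this
  exact_mod_cast this

end ShortMixedIdentities

theorem stmt0 (Γ : Type*) [Group Γ] (S : Set Γ) (hSfin : S.Finite)
    (hSgen : Subgroup.closure S = ⊤) :
    ∃ c : ℝ, 0 < c ∧ ∃ N : ℕ, ∀ n : ℕ, N ≤ n →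
      ∃ w : FPZ Γ, w ≠ 1 ∧ wordLength (genSet S) w ≤ n ∧
        ∀ g : Γ, (wordLength S g : ℝ) < c * Real.log n → wordEval g w = 1 := by
  obtain ⟨T, rfl⟩ := hSfin.exists_finset_coe
  set K := 2 * T.card + 2
  have hlogK : 0 < Real.log K := Real.log_pos (by exact_mod_cast (by omega : 1 < K))
  refine ⟨(6 * Real.log K)⁻¹, by positivity, K ^ 36, fun n hn => ?_⟩
  set L := Nat.log K n
  have hL : 36 ≤ L := Nat.le_log_of_pow_le (by omega) hn
  obtain ⟨w, hw1, hwlen, hweval⟩ := exists_mixedIdentity_of_wordLength_le T hSgen (L / 6)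
  refine ⟨w, hw1, hwlen.trans ?_, fun g hg => hweval g ?_⟩
  · calc K ^ (5 * (L / 6) + 6) ≤ K ^ L := Nat.pow_le_pow_right (by omega) (by omega)
      _ ≤ n := Nat.pow_log_le_self K (by have := Nat.one_le_pow 36 K (by omega); omega)
  · have hlt : ((6 * wordLength (T : Set Γ) g : ℕ) : ℝ) < Real.logb K n := by
      rw [Real.logb, lt_div_iff₀ hlogK]
      push_cast
      rw [lt_inv_mul_iff₀ (by positivity)] at hg
      linarith
    have := le_natLog_of_lt_logb hlt
    omega
end

section
/- With K, O_K, μ, d, Γ, S, s*, δ(s) and M as in the context: there exists c̃ > 0 (depending only on S, d and K) such that for every rational prime p which splits completely in K and every prime ideal P of O_K lying above p which divides no δ(s) (s ∈ S), the restriction of the reduction homomorphism π_P : Γ → SL_d(𝔽_p) to the ball B_S(c̃·log p) = {g ∈ Γ : |g|_S ≤ c̃·log p} is injective. -/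
/-!
Suppose `g ≠ h` have the same reduction modulo `P`. Multiplying out shortest words gives
`e₁ g = A₁` and `e₂ h = A₂` with `e₁, e₂ ∉ P` and `A₁, A₂` integral, and then some entry
`x` of `e₂ A₁ - e₁ A₂` is a nonzero element of `P`, so `p ∣ N(x)`. On the other hand the house
of `x` is at most `2 (d B)^(|g| + |h|)`, where `B` bounds the houses of the entries of the `s*`
and of the `δ(s)`, and `|N(x)| ≤ house(x)^[K:ℚ]`. Hence `p ≤ (d B)^(2 [K:ℚ] (|g| + |h|))`,
which fails once `|g|, |h| ≤ c̃ log p` for `c̃ = 1 / (8 [K:ℚ] log (d B))`.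
-/

set_option synthInstance.maxHeartbeats 1000000

open NumberField

/-- The house `μ(x)` of `x ∈ K`: the maximum of `|σ(x)|` over all field embeddings
`σ : K ↪ ℂ`. -/
noncomputable def houseK (K : Type*) [Field K] [NumberField K] (x : K) : ℝ :=
  ⨆ σ : K →+* ℂ, ‖σ x‖

/-- A rational prime `p` splits completely in the number field `K`. -/
def SplitsCompletely (K : Type*) [Field K] [NumberField K] (p : ℕ) : Prop :=
  p.Prime ∧ ∀ P : Ideal (𝓞 K), P.IsPrime → P ≠ ⊥ → (p : 𝓞 K) ∈ P →
    Ideal.ramificationIdx' (Ideal.span {(p : ℤ)}) P = 1 ∧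
    Ideal.inertiaDeg' (Ideal.span {(p : ℤ)}) P = 1

/-- `π` is the entrywise reduction modulo `P` on `Γ`: whenever `δ ∉ P` clears the
denominators of `g ∈ Γ`, i.e. `δ·g = A` entrywise with `A` integral, then
`δ·π(g) = A mod P` entrywise. -/
def IsReductionHom {d : ℕ} {K : Type*} [Field K] [NumberField K]
    (Γ : Subgroup (Matrix.SpecialLinearGroup (Fin d) K)) (P : Ideal (𝓞 K))
    (π : Γ →* Matrix.SpecialLinearGroup (Fin d) ((𝓞 K) ⧸ P)) : Prop :=
  ∀ (g : Γ) (A : Matrix (Fin d) (Fin d) (𝓞 K)) (δ : 𝓞 K), δ ∉ P →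
    (∀ i j : Fin d, algebraMap (𝓞 K) K δ *
        ((g : Matrix.SpecialLinearGroup (Fin d) K) : Matrix (Fin d) (Fin d) K) i j =
        algebraMap (𝓞 K) K (A i j)) →
    ∀ i j : Fin d,
      Ideal.Quotient.mk P δ * ((π g : Matrix (Fin d) (Fin d) ((𝓞 K) ⧸ P)) i j) =
        Ideal.Quotient.mk P (A i j)

namespace Ideal

lemma prime_dvd_absNorm_of_natCast_mem {S : Type*} [CommRing S] [IsDedekindDomain S]
    [Module.Free ℤ S] [Module.Finite ℤ S] {p : ℕ} (hp : p.Prime) {P : Ideal S} (hP : P ≠ ⊤)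
    (hpP : (p : S) ∈ P) : p ∣ absNorm P := by
  have hdvd : absNorm P ∣ p ^ Module.finrank ℤ S := by
    have := absNorm_dvd_norm_of_mem hpP
    rw [← map_natCast (algebraMap ℤ S), Algebra.norm_algebraMap] at this
    exact_mod_cast this
  obtain ⟨k, -, hk⟩ := (Nat.dvd_prime_pow hp).1 hdvd
  rcases Nat.eq_zero_or_pos k with rfl | hk0
  · exact absurd (absNorm_eq_one_iff.1 (by simpa using hk)) hP
  · exact hk ▸ dvd_pow_self p hk0.ne'

lemma prime_le_natAbs_norm_of_mem {S : Type*} [CommRing S] [IsDedekindDomain S] [Module.Free ℤ S]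
    [Module.Finite ℤ S] {p : ℕ} (hp : p.Prime) {P : Ideal S} (hP : P ≠ ⊤) (hpP : (p : S) ∈ P)
    {x : S} (hx : x ≠ 0) (hxP : x ∈ P) : p ≤ (Algebra.norm ℤ x).natAbs := by
  refine Nat.le_of_dvd (Int.natAbs_pos.2 (Algebra.norm_ne_zero_iff.2 hx))
    ((prime_dvd_absNorm_of_natCast_mem hp hP hpP).trans ?_)
  rw [← absNorm_span_singleton]
  exact absNorm_dvd_absNorm_of_le ((span_singleton_le_iff_mem _).2 hxP)

end Ideal

namespace NumberField

variable {K : Type*} [Field K] [NumberField K]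

lemma houseK_eq_house (x : K) : houseK K x = house x :=
  le_antisymm (ciSup_le (norm_embedding_le_house x))
    ((canonicalEmbedding.norm_le_iff x _).2 fun σ =>
      le_ciSup (Set.finite_range fun σ : K →+* ℂ => ‖σ x‖).bddAbove σ)

lemma house_zero : house (0 : K) = 0 := by
  simp [house]

lemma house_one : house (1 : K) = 1 := by
  simpa using house_intCast (K := K) 1

lemma house_sub_le (x y : K) : house (x - y) ≤ house x + house y := by
  simp only [house, map_sub]
  exact norm_sub_le _ _

lemma natAbs_norm_le_house_pow (x : 𝓞 K) :
    ((Algebra.norm ℤ x).natAbs : ℝ) ≤ house (algebraMap (𝓞 K) K x) ^ Module.finrank ℚ K := by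
  obtain ⟨σ⟩ := (inferInstance : Nonempty (K →+* ℂ))
  have hD : Module.finrank ℚ K = Module.finrank ℚ K - 1 + 1 :=
    (Nat.sub_add_cancel Module.finrank_pos).symm
  calc ((Algebra.norm ℤ x).natAbs : ℝ) = ‖Algebra.norm ℚ (algebraMap (𝓞 K) K x)‖ := by
        rw [← Algebra.coe_norm_int]
        simp [Int.norm_eq_abs]
    _ ≤ ‖σ (algebraMap (𝓞 K) K x)‖ * house (algebraMap (𝓞 K) K x) ^ (Module.finrank ℚ K - 1) :=
        norm_norm_le_norm_mul_house_pow _ σ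
    _ ≤ house (algebraMap (𝓞 K) K x) * house (algebraMap (𝓞 K) K x) ^ (Module.finrank ℚ K - 1) :=
        mul_le_mul_of_nonneg_right (norm_embedding_le_house _ σ) (pow_nonneg (house_nonneg _) _)
    _ = house (algebraMap (𝓞 K) K x) ^ Module.finrank ℚ K := by
        rw [← pow_succ', ← hD]

lemma prime_le_house_pow_of_mem {p : ℕ} (hp : p.Prime) {P : Ideal (𝓞 K)} (hP : P ≠ ⊤)
    (hpP : (p : 𝓞 K) ∈ P) {x : 𝓞 K} (hx : x ≠ 0) (hxP : x ∈ P) :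
    (p : ℝ) ≤ house (algebraMap (𝓞 K) K x) ^ Module.finrank ℚ K :=
  (Nat.cast_le.2 (Ideal.prime_le_natAbs_norm_of_mem hp hP hpP hx hxP)).trans
    (natAbs_norm_le_house_pow x)

lemma house_list_prod_le (l : List K) {B : ℝ} (h : ∀ x ∈ l, house x ≤ B) :
    house l.prod ≤ B ^ l.length := by
  induction l with
  | nil => simp [house_one]
  | cons a l ih =>
    have ha := h a List.mem_cons_self
    rw [List.prod_cons, List.length_cons, pow_succ']
    exact (house_mul_le _ _).trans (mul_le_mul ha (ih fun x hx => h x (List.mem_cons_of_mem _ hx))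
      (house_nonneg _) ((house_nonneg a).trans ha))

variable {n : Type*} [Fintype n]

lemma house_mul_apply_le {A A' : Matrix n n K} {a a' : ℝ} (hA : ∀ i j, house (A i j) ≤ a)
    (hA' : ∀ i j, house (A' i j) ≤ a') (i j : n) :
    house ((A * A') i j) ≤ Fintype.card n * (a * a') := by
  rw [Matrix.mul_apply]
  calc house (∑ k, A i k * A' k j) ≤ ∑ k, house (A i k * A' k j) :=
        house_sum_le_sum_house _ _
    _ ≤ ∑ _k : n, a * a' := Finset.sum_le_sum fun k _ => (house_mul_le _ _).trans
        (mul_le_mul (hA i k) (hA' k j) (house_nonneg _) ((house_nonneg _).trans (hA i k)))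
    _ = Fintype.card n * (a * a') := by simp

lemma house_list_prod_apply_le [DecidableEq n] (l : List (Matrix n n K)) {B : ℝ}
    (h : ∀ A ∈ l, ∀ i j, house (A i j) ≤ B) (i j : n) :
    house (l.prod i j) ≤ (Fintype.card n * B) ^ l.length := by
  induction l generalizing i j with
  | nil =>
    rw [List.prod_nil, Matrix.one_apply]
    split_ifs <;> simp [house_one, house_zero]
  | cons A l ih =>
    rw [List.prod_cons, List.length_cons, pow_succ', mul_assoc]
    exact house_mul_apply_le (h A List.mem_cons_self)
      (ih fun A' hA' => h A' (List.mem_cons_of_mem _ hA')) i j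

end NumberField

lemma Matrix.map_list_prod_eq_smul {ι R A n : Type*} [CommRing R] [CommRing A] [Fintype n]
    [DecidableEq n] (f : R →+* A) (e : ι → R) (N : ι → Matrix n n R) (g : ι → Matrix n n A)
    (l : List ι) (h : ∀ a ∈ l, (N a).map f = f (e a) • g a) :
    ((l.map N).prod).map f = f (l.map e).prod • (l.map g).prod := by
  induction l with
  | nil => simp [Matrix.map_one]
  | cons a l ih =>
    simp only [List.map_cons, List.prod_cons]
    rw [Matrix.map_mul, h a List.mem_cons_self,
      ih fun b hb => h b (List.mem_cons_of_mem _ hb), smul_mul_smul_comm, map_mul]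

lemma exists_ne_zero_mem_of_reduction_eq {R K n : Type*} [CommRing R] [Field K] [Algebra R K]
    [FaithfulSMul R K] {P : Ideal R} {g₁ g₂ : Matrix n n K} (hne : g₁ ≠ g₂) {e₁ e₂ : R}
    (he₁ : e₁ ≠ 0) (he₂ : e₂ ≠ 0) {A₁ A₂ : Matrix n n R}
    (h₁ : ∀ i j, algebraMap R K e₁ * g₁ i j = algebraMap R K (A₁ i j))
    (h₂ : ∀ i j, algebraMap R K e₂ * g₂ i j = algebraMap R K (A₂ i j)) {q : Matrix n n (R ⧸ P)}
    (r₁ : ∀ i j, Ideal.Quotient.mk P e₁ * q i j = Ideal.Quotient.mk P (A₁ i j))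
    (r₂ : ∀ i j, Ideal.Quotient.mk P e₂ * q i j = Ideal.Quotient.mk P (A₂ i j)) :
    ∃ i j, e₂ * A₁ i j - e₁ * A₂ i j ≠ 0 ∧ e₂ * A₁ i j - e₁ * A₂ i j ∈ P := by
  obtain ⟨i, j, hij⟩ : ∃ i j, g₁ i j ≠ g₂ i j := by
    by_contra! h
    exact hne (Matrix.ext h)
  refine ⟨i, j, fun h0 => hij ?_, ?_⟩
  · have hinj := FaithfulSMul.algebraMap_injective R K
    have h0K := congrArg (algebraMap R K) h0
    rw [map_sub, map_mul, map_mul, ← h₁, ← h₂, map_zero] at h0K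
    refine mul_left_cancel₀ (mul_ne_zero ((map_ne_zero_iff _ hinj).2 he₁)
      ((map_ne_zero_iff _ hinj).2 he₂)) ?_
    linear_combination h0K
  · rw [← Ideal.Quotient.eq_zero_iff_mem, map_sub, map_mul, map_mul, ← r₁, ← r₂]
    ring

section Words

variable {G : Type*} [Group G] {S : Set G}

lemma exists_list_prod_eq_length_eq_wordLength (hS : ∀ s ∈ S, s⁻¹ ∈ S)
    (hgen : Subgroup.closure S = ⊤) (g : G) :
    ∃ l : List G, (∀ a ∈ l, a ∈ S) ∧ l.prod = g ∧ l.length = wordLength S g := by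
  have hne : {m | ∃ l : List G, l.length = m ∧ (∀ a ∈ l, a ∈ S ∨ a⁻¹ ∈ S) ∧
      l.prod = g}.Nonempty := by
    have hg : g ∈ Submonoid.closure (S ∪ S⁻¹) := by
      rw [← Subgroup.closure_toSubmonoid, hgen]
      trivial
    obtain ⟨l, hl, rfl⟩ := Submonoid.exists_list_of_mem_closure hg
    exact ⟨l.length, l, rfl, hl, rfl⟩
  obtain ⟨l, hlen, hmem, hprod⟩ := Nat.sInf_mem hne
  refine ⟨l, fun a ha => ?_, hprod, hlen⟩
  rcases hmem a ha with h | h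
  · exact h
  · simpa using hS _ h

lemma wordLength_add_pos_of_ne (hS : ∀ s ∈ S, s⁻¹ ∈ S) (hgen : Subgroup.closure S = ⊤)
    {g h : G} (hne : g ≠ h) : 0 < wordLength S g + wordLength S h := by
  by_contra! h0
  obtain ⟨lg, -, rfl, hlg⟩ := exists_list_prod_eq_length_eq_wordLength hS hgen g
  obtain ⟨lh, -, rfl, hlh⟩ := exists_list_prod_eq_length_eq_wordLength hS hgen h
  rw [List.length_eq_zero_iff.1 (show lg.length = 0 by omega),
    List.length_eq_zero_iff.1 (show lh.length = 0 by omega)] at hne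
  exact hne rfl

end Words

section SpecialLinearGroup

variable {d : ℕ} {K : Type*} [Field K] [NumberField K]
  {Γ : Subgroup (Matrix.SpecialLinearGroup (Fin d) K)} {S : Set Γ}
  {sstar : Γ → Matrix (Fin d) (Fin d) (𝓞 K)} {δ : Γ → 𝓞 K}

lemma exists_clearDenom_house_le_pow_wordLength (hS : ∀ s ∈ S, s⁻¹ ∈ S)
    (hgen : Subgroup.closure S = ⊤)
    (hrep : ∀ s ∈ S, ∀ i j : Fin d,
      algebraMap (𝓞 K) K (δ s) *
        ((s : Matrix.SpecialLinearGroup (Fin d) K) : Matrix (Fin d) (Fin d) K) i j =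
      algebraMap (𝓞 K) K (sstar s i j))
    {P : Ideal (𝓞 K)} [P.IsPrime] (hδP : ∀ s ∈ S, δ s ∉ P) {B : ℝ}
    (hsstar : ∀ s ∈ S, ∀ i j, house (algebraMap (𝓞 K) K (sstar s i j)) ≤ B)
    (hδ : ∀ s ∈ S, house (algebraMap (𝓞 K) K (δ s)) ≤ d * B) (g : Γ) :
    ∃ (e : 𝓞 K) (A : Matrix (Fin d) (Fin d) (𝓞 K)), e ∉ P ∧
      (∀ i j, algebraMap (𝓞 K) K e *
        ((g : Matrix.SpecialLinearGroup (Fin d) K) : Matrix (Fin d) (Fin d) K) i j =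
        algebraMap (𝓞 K) K (A i j)) ∧
      house (algebraMap (𝓞 K) K e) ≤ (d * B) ^ wordLength S g ∧
      ∀ i j, house (algebraMap (𝓞 K) K (A i j)) ≤ (d * B) ^ wordLength S g := by
  obtain ⟨l, hlS, rfl, hlen⟩ := exists_list_prod_eq_length_eq_wordLength hS hgen g
  let toMatrix : Γ →* Matrix (Fin d) (Fin d) K :=
    Matrix.SpecialLinearGroup.coeMonoidHom.comp Γ.subtype
  have hmap : ((l.map sstar).prod).map (algebraMap (𝓞 K) K) =
      algebraMap (𝓞 K) K (l.map δ).prod • toMatrix l.prod := by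
    rw [map_list_prod toMatrix]
    refine Matrix.map_list_prod_eq_smul (algebraMap (𝓞 K) K) δ sstar toMatrix l fun s hs => ?_
    ext i j
    exact (hrep s (hlS s hs) i j).symm
  refine ⟨(l.map δ).prod, (l.map sstar).prod,
    fun h => ?_, fun i j => (congrFun₂ hmap i j).symm, ?_, fun i j => ?_⟩
  · exact (Submonoid.list_prod_mem P.primeCompl
      (List.forall_mem_map.2 fun s hs => hδP s (hlS s hs))) h
  · rw [map_list_prod, List.map_map, ← hlen, ← List.length_map (f := algebraMap (𝓞 K) K ∘ δ)]
    exact house_list_prod_le _ (List.forall_mem_map.2 fun s hs => hδ s (hlS s hs))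
  · rw [← Matrix.map_apply (f := algebraMap (𝓞 K) K), ← RingHom.mapMatrix_apply, map_list_prod,
      List.map_map, ← hlen, ← List.length_map (f := (algebraMap (𝓞 K) K).mapMatrix ∘ sstar)]
    refine (house_list_prod_apply_le _ (List.forall_mem_map.2 fun s hs => ?_) i j).trans_eq
      (by rw [Fintype.card_fin])
    exact hsstar s (hlS s hs)

lemma prime_le_of_reduction_eq (hS : ∀ s ∈ S, s⁻¹ ∈ S) (hgen : Subgroup.closure S = ⊤)
    (hrep : ∀ s ∈ S, ∀ i j : Fin d,
      algebraMap (𝓞 K) K (δ s) *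
        ((s : Matrix.SpecialLinearGroup (Fin d) K) : Matrix (Fin d) (Fin d) K) i j =
      algebraMap (𝓞 K) K (sstar s i j))
    {B : ℝ} (hsstar : ∀ s ∈ S, ∀ i j, house (algebraMap (𝓞 K) K (sstar s i j)) ≤ B)
    (hδ : ∀ s ∈ S, house (algebraMap (𝓞 K) K (δ s)) ≤ d * B) {p : ℕ} (hp : p.Prime)
    {P : Ideal (𝓞 K)} [hP : P.IsPrime] (hpP : (p : 𝓞 K) ∈ P) (hδP : ∀ s ∈ S, δ s ∉ P)
    {π : Γ →* Matrix.SpecialLinearGroup (Fin d) ((𝓞 K) ⧸ P)} (hπ : IsReductionHom Γ P π)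
    {g h : Γ} (hne : g ≠ h) (hgh : π g = π h) :
    (p : ℝ) ≤ (2 * (d * B) ^ (wordLength S g + wordLength S h)) ^ Module.finrank ℚ K := by
  obtain ⟨e₁, A₁, he₁P, h₁, he₁, hA₁⟩ :=
    exists_clearDenom_house_le_pow_wordLength hS hgen hrep hδP hsstar hδ g
  obtain ⟨e₂, A₂, he₂P, h₂, he₂, hA₂⟩ :=
    exists_clearDenom_house_le_pow_wordLength hS hgen hrep hδP hsstar hδ h
  have ne_zero : ∀ e ∉ P, e ≠ 0 := fun e he h0 => he (h0 ▸ P.zero_mem)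
  obtain ⟨i, j, hx0, hxP⟩ := exists_ne_zero_mem_of_reduction_eq
    (fun H => hne (Subtype.ext (Subtype.ext H))) (ne_zero e₁ he₁P) (ne_zero e₂ he₂P) h₁ h₂
    (hπ g A₁ e₁ he₁P h₁) (hgh ▸ hπ h A₂ e₂ he₂P h₂)
  refine (prime_le_house_pow_of_mem hp hP.ne_top hpP hx0 hxP).trans
    (pow_le_pow_left₀ (house_nonneg _) ?_ _)
  rw [map_sub, map_mul, map_mul]
  calc _ ≤ house (algebraMap (𝓞 K) K e₂) * house (algebraMap (𝓞 K) K (A₁ i j)) +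
        house (algebraMap (𝓞 K) K e₁) * house (algebraMap (𝓞 K) K (A₂ i j)) :=
        (house_sub_le _ _).trans (add_le_add (house_mul_le _ _) (house_mul_le _ _))
    _ ≤ (d * B) ^ wordLength S h * (d * B) ^ wordLength S g +
        (d * B) ^ wordLength S g * (d * B) ^ wordLength S h :=
        add_le_add (mul_le_mul he₂ (hA₁ i j) (house_nonneg _) ((house_nonneg _).trans he₂))
          (mul_le_mul he₁ (hA₂ i j) (house_nonneg _) ((house_nonneg _).trans he₁))
    _ = 2 * (d * B) ^ (wordLength S g + wordLength S h) := by ring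

end SpecialLinearGroup

lemma log_le_of_le_two_mul_pow_pow {x C : ℝ} (hx : 0 < x) (hC : 2 ≤ C) {L D : ℕ} (hL : 0 < L)
    (h : x ≤ (2 * C ^ L) ^ D) : Real.log x ≤ 2 * L * D * Real.log C := by
  have hxC : x ≤ C ^ (2 * L * D) := calc
    x ≤ (2 * C ^ L) ^ D := h
    _ ≤ (C ^ L * C ^ L) ^ D := by
      gcongr
      exact hC.trans (le_self_pow₀ (by linarith) hL.ne')
    _ = C ^ (2 * L * D) := by ring
  simpa [Real.log_pow] using Real.log_le_log hx hxC

theorem stmt11_general (d : ℕ) (hd : 2 ≤ d) (K : Type*) [Field K] [NumberField K]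
    (Γ : Subgroup (Matrix.SpecialLinearGroup (Fin d) K))
    (S : Set Γ) (hSsymm : ∀ s ∈ S, s⁻¹ ∈ S)
    (hSgen : Subgroup.closure S = ⊤)
    (sstar : Γ → Matrix (Fin d) (Fin d) (𝓞 K)) (δ : Γ → 𝓞 K)
    (hrep : ∀ s ∈ S, ∀ i j : Fin d,
      algebraMap (𝓞 K) K (δ s) *
        ((s : Matrix.SpecialLinearGroup (Fin d) K) : Matrix (Fin d) (Fin d) K) i j =
      algebraMap (𝓞 K) K (sstar s i j))
    (M : ℝ)
    (hMs : ∀ s ∈ S, ∀ i j : Fin d, sstar s i j ≠ 0 →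
      houseK K (algebraMap (𝓞 K) K (sstar s i j)) ≤ M)
    (hMδ : ∀ s ∈ S, houseK K (algebraMap (𝓞 K) K (δ s)) ≤ M) :
    ∃ c : ℝ, 0 < c ∧
      ∀ p : ℕ, SplitsCompletely K p →
        ∀ P : Ideal (𝓞 K), P.IsPrime → P ≠ ⊥ → (p : 𝓞 K) ∈ P →
          (∀ s ∈ S, δ s ∉ P) →
          ∀ π : Γ →* Matrix.SpecialLinearGroup (Fin d) ((𝓞 K) ⧸ P),
            IsReductionHom Γ P π →
            ∀ g h : Γ, (wordLength S g : ℝ) ≤ c * Real.log p →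
              (wordLength S h : ℝ) ≤ c * Real.log p → π g = π h → g = h := by
  have hd' : (2 : ℝ) ≤ d := by exact_mod_cast hd
  set B := max M 1
  set C : ℝ := d * B
  have hC : 2 ≤ C := by nlinarith [le_max_right M 1]
  have hB : ∀ x : 𝓞 K, (x ≠ 0 → houseK K (algebraMap (𝓞 K) K x) ≤ M) →
      house (algebraMap (𝓞 K) K x) ≤ B := fun x hx => by
    by_cases h0 : x = 0
    · simp [h0, house_zero, B]
    · exact houseK_eq_house (K := K) _ ▸ (hx h0).trans (le_max_left M 1)
  have hδ : ∀ s ∈ S, house (algebraMap (𝓞 K) K (δ s)) ≤ C := fun s hs =>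
    (hB _ fun _ => hMδ s hs).trans (le_mul_of_one_le_left (by positivity) (by linarith))
  have hD : (0 : ℝ) < Module.finrank ℚ K := by exact_mod_cast Module.finrank_pos
  have hlogC : 0 < Real.log C := Real.log_pos (by linarith)
  have hK : 0 < 8 * Module.finrank ℚ K * Real.log C := by positivity
  refine ⟨(8 * Module.finrank ℚ K * Real.log C)⁻¹, inv_pos.2 hK, ?_⟩
  intro p hp P hP _ hpP hδP π hπ g h hg hh hgh
  by_contra hne
  have hlog := log_le_of_le_two_mul_pow_pow (by exact_mod_cast hp.1.pos) hC
    (wordLength_add_pos_of_ne hSsymm hSgen hne)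
    (prime_le_of_reduction_eq hSsymm hSgen hrep (fun s hs i j => hB _ (hMs s hs i j)) hδ hp.1
      hpP hδP hπ hne hgh)
  have : Real.log p ≤ Real.log p / 2 := calc
    _ ≤ 2 * ((wordLength S g + wordLength S h : ℕ) : ℝ) * Module.finrank ℚ K * Real.log C := hlog
    _ ≤ 2 * (2 * (8 * Module.finrank ℚ K * Real.log C)⁻¹ * Real.log p) * Module.finrank ℚ K *
        Real.log C := by
      gcongr
      push_cast
      linarith
    _ = Real.log p / 2 := by
      field_simp
      ring
  linarith [Real.log_pos (by exact_mod_cast hp.1.one_lt : (1 : ℝ) < p)]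

theorem stmt11 (d : ℕ) (hd : 2 ≤ d) (K : Type*) [Field K] [NumberField K]
    (Γ : Subgroup (Matrix.SpecialLinearGroup (Fin d) K))
    (S : Set Γ) (hSfin : S.Finite) (hSsymm : ∀ s ∈ S, s⁻¹ ∈ S) (hSone : (1 : Γ) ∈ S)
    (hSgen : Subgroup.closure S = ⊤)
    (sstar : Γ → Matrix (Fin d) (Fin d) (𝓞 K)) (δ : Γ → 𝓞 K)
    (hδ : ∀ s ∈ S, δ s ≠ 0)
    (hrep : ∀ s ∈ S, ∀ i j : Fin d,
      algebraMap (𝓞 K) K (δ s) *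
        ((s : Matrix.SpecialLinearGroup (Fin d) K) : Matrix (Fin d) (Fin d) K) i j =
      algebraMap (𝓞 K) K (sstar s i j))
    (M : ℝ)
    (hMs : ∀ s ∈ S, ∀ i j : Fin d, sstar s i j ≠ 0 →
      houseK K (algebraMap (𝓞 K) K (sstar s i j)) ≤ M)
    (hMδ : ∀ s ∈ S, houseK K (algebraMap (𝓞 K) K (δ s)) ≤ M) :
    ∃ c : ℝ, 0 < c ∧
      ∀ p : ℕ, SplitsCompletely K p →
        ∀ P : Ideal (𝓞 K), P.IsPrime → P ≠ ⊥ → (p : 𝓞 K) ∈ P →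
          (∀ s ∈ S, δ s ∉ P) →
          ∀ π : Γ →* Matrix.SpecialLinearGroup (Fin d) ((𝓞 K) ⧸ P),
            IsReductionHom Γ P π →
            ∀ g h : Γ, (wordLength S g : ℝ) ≤ c * Real.log p →
              (wordLength S h : ℝ) ≤ c * Real.log p → π g = π h → g = h :=
  stmt11_general d hd K Γ S hSsymm hSgen sstar δ hrep M hMs hMδ
end

section
/- For every prime p and every proper subgroup H of SL₂(𝔽_p), either H is metabelian (the commutator subgroup [H,H] is abelian) or the order of H divides 240. -/
/-!
If `p` divides `|H|`, then `H` contains an element of order `p`; it fixes a line `x`, and over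
`𝔽_p` it generates the whole group of transvections fixing `x`. If some `h ∈ H` moved `x`, `H`
would also contain the transvections fixing `h • x`, and the transvections fixing two distinct
lines generate `SL₂`. Hence `H` fixes `x`, so its commutators are transvections fixing `x`, and
these commute.

If `p` does not divide `|H|`, let `H` act on the projective line over `𝔽̄_p`. An element outside
`{±1}` of order prime to `p` has two distinct eigenvalues, hence exactly two fixed points. If some
orbit has at most two points, its stabilizer has index at most two and contains `[H, H]`; the
commutators of this stabilizer are transvections of order prime to `p`, hence trivial, so `H` is
metabelian. Otherwise Burnside's lemma for `H / (H ∩ {±1})` acting on the points with nontrivial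
stabilizer gives Klein's orbit equation, whose solutions with all orbits of size at least three
are the orders `12, 24, 60`; as `|H ∩ {±1}| ≤ 2`, `|H|` divides `240`.
-/

open Matrix MulAction
open scoped MatrixGroups LinearAlgebra.Projectivization commutatorElement

def IsMetabelian (G : Type*) [Group G] : Prop :=
  ∀ a b c d : G, ⁅⁅a, b⁆, ⁅c, d⁆⁆ = 1

theorem IsMetabelian.of_injective {G G' : Type*} [Group G] [Group G'] {f : G →* G'}
    (hf : Function.Injective f) (h : IsMetabelian G') : IsMetabelian G := fun a b c d =>
  hf (by rw [map_commutatorElement, map_commutatorElement, map_commutatorElement, h, map_one])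

theorem IsMetabelian.of_commutatorElement_mem {G : Type*} [Group G] (A : Subgroup G)
    (hA : ∀ x ∈ A, ∀ y ∈ A, Commute x y) (h : ∀ a b : G, ⁅a, b⁆ ∈ A) : IsMetabelian G :=
  fun a b c d => commutatorElement_eq_one_iff_commute.2 (hA _ (h a b) _ (h c d))

theorem Subgroup.commutatorElement_mem_of_index_le_two {G : Type*} [Group G] {S : Subgroup G}
    [S.FiniteIndex] (hS : S.index ≤ 2) (a b : G) : ⁅a, b⁆ ∈ S := by
  obtain h | h : S.index = 1 ∨ S.index = 2 := by have := S.index_ne_zero_of_finite; omega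
  · rw [Subgroup.index_eq_one.1 h]
    exact mem_top _
  · rw [commutatorElement_def, mul_mem_iff_of_index_two h, mul_mem_iff_of_index_two h,
      mul_mem_iff_of_index_two h, inv_mem_iff, inv_mem_iff]
    tauto

theorem eq_of_orbit_equation_of_eq_two_of_eq_three {N o₁ o₂ o₃ e₃ : ℕ} (h₁ : o₁ * 2 = N)
    (h₂ : o₂ * 3 = N) (h₃ : o₃ * e₃ = N) (ho₂ : 3 ≤ o₂) (hsum : o₁ + o₂ + o₃ = N + 2) :
    N = 12 ∨ N = 24 ∨ N = 60 := by
  have he₃ : e₃ < 6 := Nat.lt_of_mul_lt_mul_left (a := o₃) (by omega)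
  interval_cases e₃ <;> omega

theorem eq_of_orbit_equation_of_eq_two {N o₁ o₂ o₃ e₂ e₃ : ℕ} (h₁ : o₁ * 2 = N)
    (h₂ : o₂ * e₂ = N) (h₃ : o₃ * e₃ = N) (he₂ : 2 ≤ e₂) (he₃ : 2 ≤ e₃) (ho₂ : 3 ≤ o₂)
    (ho₃ : 3 ≤ o₃) (hsum : o₁ + o₂ + o₃ = N + 2) : N = 12 ∨ N = 24 ∨ N = 60 := by
  by_cases hle₂ : e₂ ≤ 3
  · obtain rfl | rfl : e₂ = 2 ∨ e₂ = 3 := by omega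
    · omega
    · exact eq_of_orbit_equation_of_eq_two_of_eq_three h₁ h₂ h₃ ho₂ hsum
  by_cases hle₃ : e₃ ≤ 3
  · obtain rfl | rfl : e₃ = 2 ∨ e₃ = 3 := by omega
    · omega
    · exact eq_of_orbit_equation_of_eq_two_of_eq_three h₁ h₃ h₂ ho₃ (by omega)
  have := Nat.mul_le_mul_left o₂ (show 4 ≤ e₂ by omega)
  have := Nat.mul_le_mul_left o₃ (show 4 ≤ e₃ by omega)
  omega

theorem eq_of_orbit_equation_three {N o₁ o₂ o₃ e₁ e₂ e₃ : ℕ} (h₁ : o₁ * e₁ = N)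
    (h₂ : o₂ * e₂ = N) (h₃ : o₃ * e₃ = N) (he₁ : 2 ≤ e₁) (he₂ : 2 ≤ e₂) (he₃ : 2 ≤ e₃)
    (ho₁ : 3 ≤ o₁) (ho₂ : 3 ≤ o₂) (ho₃ : 3 ≤ o₃) (hsum : o₁ + o₂ + o₃ = N + 2) :
    N = 12 ∨ N = 24 ∨ N = 60 := by
  by_cases h : e₁ = 2
  · exact eq_of_orbit_equation_of_eq_two (h ▸ h₁) h₂ h₃ he₂ he₃ ho₂ ho₃ hsum
  by_cases h' : e₂ = 2
  · exact eq_of_orbit_equation_of_eq_two (h' ▸ h₂) h₁ h₃ he₁ he₃ ho₁ ho₃ (by omega)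
  by_cases h'' : e₃ = 2
  · exact eq_of_orbit_equation_of_eq_two (h'' ▸ h₃) h₁ h₂ he₁ he₂ ho₁ ho₂ (by omega)
  have := Nat.mul_le_mul_left o₁ (show 3 ≤ e₁ by omega)
  have := Nat.mul_le_mul_left o₂ (show 3 ≤ e₂ by omega)
  have := Nat.mul_le_mul_left o₃ (show 3 ≤ e₃ by omega)
  omega

/-- Klein's orbit equation `∑ᵢ (1 - 1 / eᵢ) = 2 - 2 / N`, multiplied by `N`, for orbits of sizes
`oᵢ = N / eᵢ`. -/
theorem eq_of_orbit_equation {ι : Type*} [Fintype ι] {N : ℕ} (hN : 2 ≤ N) {o e : ι → ℕ}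
    (hoe : ∀ i, o i * e i = N) (he : ∀ i, 2 ≤ e i) (ho : ∀ i, 3 ≤ o i)
    (hsum : ∑ i, o i + 2 * N = Fintype.card ι * N + 2) : N = 12 ∨ N = 24 ∨ N = 60 := by
  have h3 : 3 * Fintype.card ι ≤ ∑ i, o i := by
    simpa [mul_comm] using Finset.card_nsmul_le_sum Finset.univ o 3 fun i _ => ho i
  have h2 : 2 * ∑ i, o i ≤ Fintype.card ι * N := by
    rw [Finset.mul_sum]
    simpa [mul_comm] using Finset.sum_le_card_nsmul Finset.univ (fun i => 2 * o i) N
      fun i _ => by rw [← hoe i, mul_comm]; exact Nat.mul_le_mul_left _ (he i)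
  have hr : Fintype.card ι ≤ 3 := by
    by_contra! h
    have := Nat.mul_le_mul_right N (show 4 ≤ Fintype.card ι by omega)
    omega
  interval_cases hcard : Fintype.card ι
  · omega
  · omega
  · omega
  classical
  obtain ⟨i, j, k, hij, hik, hjk, huniv⟩ :=
    Finset.card_eq_three.1 ((Finset.card_univ (α := ι)).trans hcard)
  rw [huniv, Finset.sum_insert (by simp [hij, hik]), Finset.sum_insert (by simpa),
    Finset.sum_singleton] at hsum
  exact eq_of_orbit_equation_three (hoe i) (hoe j) (hoe k) (he i) (he j) (he k) (ho i) (ho j)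
    (ho k) (by omega)

namespace MulAction

variable (G X : Type*) [Group G] [MulAction G X]

/-- The poles of Klein's classification of finite rotation groups. -/
def poles : SubMulAction G X where
  carrier := {x | ∃ g : G, g ≠ 1 ∧ g • x = x}
  smul_mem' h x := by
    rintro ⟨g, hg, hgx⟩
    refine ⟨h * g * h⁻¹, by simpa [mul_inv_eq_one] using hg, ?_⟩
    rw [mul_smul, mul_smul, inv_smul_smul, hgx]

variable {G X}

theorem finite_poles [Finite G] (hfix : ∀ g : G, g ≠ 1 → (fixedBy X g).Finite) :
    Finite (poles G X) := by
  refine Set.Finite.subset (Set.finite_iUnion fun g : {g : G // g ≠ 1} => hfix g g.2) ?_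
  rintro x ⟨g, hg, hgx⟩
  exact Set.mem_iUnion.2 ⟨⟨g, hg⟩, hgx⟩

theorem ncard_fixedBy_poles {g : G} (hg : g ≠ 1) :
    (fixedBy (poles G X) g).ncard = (fixedBy X g).ncard := by
  have : fixedBy (poles G X) g = Subtype.val ⁻¹' fixedBy X g := by
    ext y
    simp [mem_fixedBy, Subtype.ext_iff]
  rw [this, Set.ncard_preimage_of_injective_subset_range Subtype.val_injective
    fun x hx => ⟨⟨x, g, hg, hx⟩, rfl⟩]

theorem ncard_orbit_poles (y : poles G X) : (orbit G y).ncard = (orbit G (y : X)).ncard := by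
  rw [← Set.ncard_image_of_injective _ Subtype.val_injective, SubMulAction.val_image_orbit]

theorem two_le_card_stabilizer_poles [Finite G] (y : poles G X) :
    2 ≤ Nat.card (stabilizer G y) := by
  obtain ⟨g, hg, hgy⟩ := y.2
  rw [SubMulAction.stabilizer_of_subMul]
  exact (Subgroup.one_lt_card_iff_ne_bot _).2
    fun h => hg ((Subgroup.eq_bot_iff_forall _).1 h g hgy)

/-- Burnside's lemma for the action on the poles gives Klein's orbit equation. -/
theorem card_eq_of_card_fixedBy_eq_two [Finite G] [Nonempty X]
    (hfix : ∀ g : G, g ≠ 1 → Nat.card (fixedBy X g) = 2)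
    (horbit : ∀ x : X, 3 ≤ (orbit G x).ncard) :
    Nat.card G = 12 ∨ Nat.card G = 24 ∨ Nat.card G = 60 := by
  classical
  set Y := poles G X
  have : Finite Y :=
    finite_poles fun g hg => Nat.finite_of_card_ne_zero (hfix g hg ▸ two_ne_zero)
  have : Fintype G := Fintype.ofFinite G
  have : Fintype Y := Fintype.ofFinite Y
  have hfixY (g : G) : Fintype.card (fixedBy Y g) = if g = 1 then Fintype.card Y else 2 := by
    split_ifs with hg
    · simp [hg, fixedBy_one_eq_univ]
    · rw [← Nat.card_eq_fintype_card, Nat.card_coe_set_eq, ncard_fixedBy_poles hg,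
        ← Nat.card_coe_set_eq, hfix g hg]
  have hN : 2 ≤ Nat.card G := by
    obtain ⟨x⟩ := ‹Nonempty X›
    have := horbit x
    have := Nat.le_of_dvd Nat.card_pos
      ((index_stabilizer G x).symm ▸ (stabilizer G x).index_dvd_card)
    omega
  have hburn := sum_card_fixedBy_eq_card_orbits_mul_card_group G Y
  rw [Fintype.sum_congr _ _ hfixY, ← Finset.add_sum_erase _ _ (Finset.mem_univ 1), if_pos rfl,
    Finset.sum_congr rfl (fun g hg => if_neg (Finset.ne_of_mem_erase hg)), Finset.sum_const,
    Finset.card_erase_of_mem (Finset.mem_univ 1), Finset.card_univ, smul_eq_mul] at hburn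
  simp only [← Nat.card_eq_fintype_card] at hburn
  have hY : Nat.card Y = ∑ ω : orbitRel.Quotient G Y, Nat.card (orbit G ω.out) := by
    rw [Nat.card_congr (selfEquivSigmaOrbits G Y), Nat.card_sigma]
  refine eq_of_orbit_equation hN (o := fun ω : orbitRel.Quotient G Y => Nat.card (orbit G ω.out))
    (e := fun ω => Nat.card (stabilizer G ω.out)) (fun ω => ?_)
    (fun ω => two_le_card_stabilizer_poles _)
    (fun ω => by rw [Nat.card_coe_set_eq, ncard_orbit_poles]; exact horbit _) ?_
  · rw [Nat.card_coe_set_eq, ← index_stabilizer, mul_comm, Subgroup.card_mul_index]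
  · rw [← hY, ← Nat.card_eq_fintype_card]
    have : 1 ≤ Nat.card G := Nat.card_pos
    change _ = Nat.card (Quotient (orbitRel G Y)) * _ + _
    omega

theorem card_range_toPermHom_eq_of_card_fixedBy_eq_two [Finite G] [Nonempty X]
    (hfix : ∀ g : G, g ∉ (toPermHom G X).ker → Nat.card (fixedBy X g) = 2)
    (horbit : ∀ x : X, 3 ≤ (orbit G x).ncard) :
    Nat.card (toPermHom G X).range = 12 ∨ Nat.card (toPermHom G X).range = 24 ∨
      Nat.card (toPermHom G X).range = 60 := by
  have : Finite (toPermHom G X).range := .of_surjective _ (toPermHom G X).rangeRestrict_surjective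
  refine card_eq_of_card_fixedBy_eq_two (X := X) ?_ fun x => ?_
  · rintro ⟨_, g, rfl⟩ hg
    exact hfix g fun h => hg (Subtype.ext h)
  · convert horbit x using 2
    ext y
    simp only [mem_orbit_iff]
    constructor
    · rintro ⟨⟨_, g, rfl⟩, h⟩
      exact ⟨g, h⟩
    · rintro ⟨g, h⟩
      exact ⟨⟨toPermHom G X g, g, rfl⟩, h⟩

end MulAction

section TwoByTwo

variable {F : Type*} [Field F]

theorem exists_smul_eq_of_cross_eq_zero {v w : Fin 2 → F} (hv : v ≠ 0)
    (h : v 0 * w 1 = v 1 * w 0) : ∃ a : F, a • v = w := by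
  by_contra! hne
  have := (LinearIndependent.pair_iff' hv).2 hne
  have h2 := linearIndependent_rows_iff_isUnit (A := Matrix.of ![v, w])
  simp [this, isUnit_iff_isUnit_det, det_fin_two, h] at h2

theorem exists_smul_eq_of_mulVec_eq_zero {A : Matrix (Fin 2) (Fin 2) F} (hA : A ≠ 0)
    {v w : Fin 2 → F} (hv : v ≠ 0) (hAv : A *ᵥ v = 0) (hAw : A *ᵥ w = 0) :
    ∃ a : F, a • v = w := by
  by_contra! h
  let b := basisOfLinearIndependentOfCardEqFinrank ((LinearIndependent.pair_iff' hv).2 h)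
    (by simp)
  refine hA (toLin'.injective (b.ext fun i => ?_))
  fin_cases i
  · simpa [b] using hAv
  · simpa [b] using hAw

end TwoByTwo

namespace Matrix.SpecialLinearGroup

theorem map_injective {n R S : Type*} [Fintype n] [DecidableEq n] [CommRing R] [CommRing S]
    {f : R →+* S} (hf : Function.Injective f) : Function.Injective (map (n := n) f) :=
  fun _ _ h => Subtype.ext (Matrix.map_injective hf (congrArg Subtype.val h))

variable {F : Type*} [Field F]

theorem smul_fin_two (A : SL(2, F)) (w : Fin 2 → F) :
    A • w = ![A 0 0 * w 0 + A 0 1 * w 1, A 1 0 * w 0 + A 1 1 * w 1] := by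
  rw [SpecialLinearGroup.smul_def, smul_eq_mulVec, mulVec_fin_two]

theorem smul_eq_smul_iff_mulVec_eq_zero {g : SL(2, F)} {κ : F} {v : Fin 2 → F} :
    g • v = κ • v ↔ ((g : Matrix (Fin 2) (Fin 2) F) - κ • 1) *ᵥ v = 0 := by
  rw [sub_mulVec, smul_mulVec, one_mulVec, sub_eq_zero, SpecialLinearGroup.smul_def,
    smul_eq_mulVec]

theorem exists_smul_eq_smul_iff {g : SL(2, F)} {κ : F} :
    (∃ v : Fin 2 → F, v ≠ 0 ∧ g • v = κ • v) ↔
      κ ^ 2 - (g : Matrix (Fin 2) (Fin 2) F).trace * κ + 1 = 0 := by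
  simp only [smul_eq_smul_iff_mulVec_eq_zero, exists_mulVec_eq_zero_iff]
  have hdet := g.det_coe
  rw [det_fin_two] at hdet ⊢
  simp only [sub_apply, smul_apply, one_apply_eq, one_apply_ne zero_ne_one,
    one_apply_ne one_ne_zero, smul_eq_mul, mul_one, mul_zero, sub_zero, trace_fin_two]
  constructor <;> intro h
  · linear_combination h - hdet
  · linear_combination h + hdet

theorem trace_eq_two_of_smul_eq_self {A : SL(2, F)} {v : Fin 2 → F} (hv : v ≠ 0)
    (hAv : A • v = v) : (A : Matrix (Fin 2) (Fin 2) F).trace = 2 := by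
  have h := (exists_smul_eq_smul_iff (g := A) (κ := 1)).1 ⟨v, hv, by rw [one_smul, hAv]⟩
  linear_combination -h

theorem mem_lineStab_span_iff {A : SL(2, F)} {v : Fin 2 → F} (hv : v ≠ 0) :
    A ∈ lineStab (F ∙ v) ↔ A • v = v := by
  refine ⟨lineStab_fix_of_span v hv A, fun hAv w => Submodule.mem_span_singleton.2 ?_⟩
  have ht := trace_eq_two_of_smul_eq_self hv hAv
  rw [trace_fin_two] at ht
  rw [smul_fin_two] at hAv ⊢
  have h0 := congrFun hAv 0
  have h1 := congrFun hAv 1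
  simp only [Fin.isValue, cons_val_zero, cons_val_one] at h0 h1
  refine exists_smul_eq_of_cross_eq_zero hv ?_
  simp only [Fin.isValue, Pi.sub_apply, cons_val_zero, cons_val_one]
  -- modulo `A • v = v`, the determinant of `v` and `A • w - w` is a multiple of `tr A - 2`
  linear_combination w 0 * h1 - w 1 * h0 + (w 1 * v 0 - w 0 * v 1) * ht

theorem smul_mk_eq_self_iff {g : SL(2, F)} {v : Fin 2 → F} (hv : v ≠ 0) :
    g • Projectivization.mk F v hv = .mk F v hv ↔ ∃ a : F, g • v = a • v := by
  rw [Projectivization.smul_mk, Projectivization.mk_eq_mk_iff']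
  simp only [eq_comm]

theorem inv_smul_eq_of_smul_eq {g : SL(2, F)} {v : Fin 2 → F} {a : F} (ha : a ≠ 0)
    (h : g • v = a • v) : g⁻¹ • v = a⁻¹ • v := by
  rw [inv_smul_eq_iff, smul_comm, h, smul_smul, inv_mul_cancel₀ ha, one_smul]

theorem commutatorElement_mem_lineStab {x : ℙ F (Fin 2 → F)} {g h : SL(2, F)}
    (hg : g ∈ stabilizer SL(2, F) x) (hh : h ∈ stabilizer SL(2, F) x) :
    ⁅g, h⁆ ∈ lineStab x.submodule := by
  induction x using Projectivization.ind with | _ v hv => ?_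
  rw [Projectivization.submodule_mk, mem_lineStab_span_iff hv]
  obtain ⟨a, ha⟩ := (smul_mk_eq_self_iff hv).1 hg
  obtain ⟨b, hb⟩ := (smul_mk_eq_self_iff hv).1 hh
  have ha0 : a ≠ 0 := by
    rintro rfl
    exact hv ((smul_eq_zero_iff_eq g).1 (by simpa using ha))
  have hb0 : b ≠ 0 := by
    rintro rfl
    exact hv ((smul_eq_zero_iff_eq h).1 (by simpa using hb))
  rw [commutatorElement_def, mul_smul, mul_smul, mul_smul, inv_smul_eq_of_smul_eq hb0 hb,
    smul_comm g⁻¹, inv_smul_eq_of_smul_eq ha0 ha, smul_comm h, smul_comm h, hb, smul_comm g,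
    smul_comm g, smul_comm g, ha, smul_smul, smul_smul, smul_smul]
  rw [show b⁻¹ * a⁻¹ * b * a = 1 by field_simp, one_smul]

theorem isMetabelian_of_le_stabilizer {H : Subgroup SL(2, F)} {x : ℙ F (Fin 2 → F)}
    (hx : H ≤ stabilizer SL(2, F) x) : IsMetabelian H := by
  refine IsMetabelian.of_commutatorElement_mem ((lineStab x.submodule).comap H.subtype)
    (fun a ha b hb => ?_) (fun a b => commutatorElement_mem_lineStab (hx a.2) (hx b.2))
  rw [x.submodule_eq] at ha hb
  exact Subtype.ext (lineStab_isMulCommutative_of_span' _ x.rep_nonzero _ _ ha hb)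

theorem lineStab_smul_submodule (g : SL(2, F)) (x : ℙ F (Fin 2 → F)) :
    lineStab (g • x).submodule = (lineStab x.submodule).map (MulAut.conj g).toMonoidHom := by
  rw [PSL.smul_submodule, lineStab_smul, Subgroup.pointwise_smul_def]
  rfl

theorem mem_lineStab_smul_submodule_iff {g A : SL(2, F)} {x : ℙ F (Fin 2 → F)} :
    A ∈ lineStab (g • x).submodule ↔ g⁻¹ * A * g ∈ lineStab x.submodule := by
  rw [lineStab_smul_submodule, Subgroup.mem_map_equiv]
  simp [MulAut.conj_symm_apply]

theorem lineStab_sup_eq_top {x y : ℙ F (Fin 2 → F)} (hxy : x ≠ y) :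
    lineStab x.submodule ⊔ lineStab y.submodule = ⊤ := by
  have e₀ : (Pi.single 0 1 : Fin 2 → F) ≠ 0 := by simp
  have e₁ : (Pi.single 1 1 : Fin 2 → F) ≠ 0 := by simp
  have hne : Projectivization.mk F _ e₀ ≠ .mk F _ e₁ := by
    rw [Ne, Projectivization.mk_eq_mk_iff']
    rintro ⟨a, ha⟩
    simpa using congrFun ha 0
  obtain ⟨g, hgx, hgy⟩ :=
    (is_two_pretransitive_iff (G := SL(2, F)) (α := ℙ F (Fin 2 → F))).1 inferInstance hne hxy
  rw [← hgx, ← hgy, lineStab_smul_submodule, lineStab_smul_submodule, ← Subgroup.map_sup,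
    Projectivization.submodule_mk, Projectivization.submodule_mk,
    SL2Gen.SL_card_two_lineStab_sup_eq_top]
  exact Subgroup.map_top_of_surjective _ (MulAut.conj g).surjective

theorem le_stabilizer_of_lineStab_le {H : Subgroup SL(2, F)} (hH : H ≠ ⊤) {x : ℙ F (Fin 2 → F)}
    (hx : lineStab x.submodule ≤ H) : H ≤ stabilizer SL(2, F) x := by
  intro h hh
  by_contra hhx
  refine hH (top_unique ?_)
  rw [← lineStab_sup_eq_top (Ne.symm hhx), lineStab_smul_submodule]
  refine sup_le hx (Subgroup.map_le_iff_le_comap.2 fun A hA => ?_)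
  exact H.mul_mem (H.mul_mem hh (hx hA)) (H.inv_mem hh)

theorem exists_mem_lineStab_of_pow_eq_one (p : ℕ) [Fact p.Prime] [CharP F p] {u : SL(2, F)}
    (hu : u ^ p = 1) : ∃ x : ℙ F (Fin 2 → F), u ∈ lineStab x.submodule := by
  have hnil : ((u : Matrix (Fin 2) (Fin 2) F) - 1) ^ p = 0 := by
    rw [sub_pow_char_of_commute _ (Commute.one_right _), one_pow, ← coe_pow, hu, coe_one,
      sub_self]
  have hdet : ((u : Matrix (Fin 2) (Fin 2) F) - 1).det = 0 :=
    pow_eq_zero_iff (Fact.out : p.Prime).ne_zero |>.1 (by rw [← det_pow, hnil, det_zero])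
  obtain ⟨v, hv, huv⟩ := exists_mulVec_eq_zero_iff.2 hdet
  refine ⟨.mk F v hv, ?_⟩
  rw [Projectivization.submodule_mk, mem_lineStab_span_iff hv, SpecialLinearGroup.smul_def,
    smul_eq_mulVec]
  rwa [sub_mulVec, one_mulVec, sub_eq_zero] at huv

theorem mem_lineStab_span_single_iff {A : SL(2, F)} :
    A ∈ lineStab (F ∙ Pi.single 0 1) ↔ ∃ b : F, transvection zero_ne_one b = A := by
  refine ⟨fun hA => ?_, fun ⟨b, hb⟩ => hb ▸ SL2Gen.transvection_mem_lineStab zero_ne_one b⟩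
  have hfix := (mem_lineStab_span_iff (by simp)).1 hA
  rw [smul_fin_two] at hfix
  have h0 := congrFun hfix 0
  have h1 := congrFun hfix 1
  have hdet := A.det_coe
  rw [det_fin_two] at hdet
  simp only [Pi.single_eq_same, Pi.single_eq_of_ne one_ne_zero, mul_one, mul_zero, add_zero,
    cons_val_zero, cons_val_one, cons_val_fin_one] at h0 h1
  have h11 : A 1 1 = 1 := by simpa [h0, h1] using hdet
  refine ⟨A 0 1, Subtype.ext ?_⟩
  ext i j
  fin_cases i <;> fin_cases j <;> simp [transvection_coe, h0, h1, h11]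

theorem transvection_pow {i j : Fin 2} (hij : i ≠ j) (b : F) (n : ℕ) :
    transvection hij b ^ n = transvection hij (n * b) := by
  induction n with
  | zero => simp
  | succ n ih =>
    rw [pow_succ, ih]
    apply Subtype.ext
    change Matrix.transvection i j (n * b : F) * Matrix.transvection i j b =
      Matrix.transvection i j ((n + 1 : ℕ) * b)
    rw [transvection_mul_transvection_same _ _ hij]
    push_cast
    ring_nf

theorem lineStab_span_single_le_zpowers {p : ℕ} [Fact p.Prime] {u : SL(2, ZMod p)}
    (hu : u ∈ lineStab (ZMod p ∙ Pi.single 0 1)) (hu1 : u ≠ 1) :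
    lineStab (ZMod p ∙ Pi.single 0 1) ≤ Subgroup.zpowers u := by
  obtain ⟨a, rfl⟩ := mem_lineStab_span_single_iff.1 hu
  have ha : a ≠ 0 := by
    rintro rfl
    exact hu1 (transvection_coeff_zero _)
  intro A hA
  obtain ⟨b, rfl⟩ := mem_lineStab_span_single_iff.1 hA
  refine ⟨(b / a).val, ?_⟩
  simp only [zpow_natCast]
  rw [transvection_pow, ZMod.natCast_zmod_val, div_mul_cancel₀ b ha]

theorem lineStab_le_zpowers {p : ℕ} [Fact p.Prime] {x : ℙ (ZMod p) (Fin 2 → ZMod p)}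
    {u : SL(2, ZMod p)} (hu : u ∈ lineStab x.submodule) (hu1 : u ≠ 1) :
    lineStab x.submodule ≤ Subgroup.zpowers u := by
  obtain ⟨g, hg⟩ := exists_smul_eq SL(2, ZMod p) x (.mk _ (Pi.single 0 1) (by simp))
  have hconj {A : SL(2, ZMod p)} (hA : A ∈ lineStab x.submodule) :
      g * A * g⁻¹ ∈ lineStab (ZMod p ∙ Pi.single 0 1) := by
    rw [← Projectivization.submodule_mk _ (by simp), ← hg, mem_lineStab_smul_submodule_iff]
    simpa [mul_assoc] using hA
  intro A hA
  obtain ⟨n, hn⟩ := lineStab_span_single_le_zpowers (hconj hu)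
    (by simpa [mul_inv_eq_one] using hu1) (hconj hA)
  refine ⟨n, mul_left_cancel (a := g) (mul_right_cancel (b := g⁻¹) ?_)⟩
  simpa [conj_zpow] using hn

theorem exists_le_stabilizer_of_dvd_card {p : ℕ} [Fact p.Prime] {H : Subgroup SL(2, ZMod p)}
    (hH : H ≠ ⊤) (hpH : p ∣ Nat.card H) :
    ∃ x : ℙ (ZMod p) (Fin 2 → ZMod p), H ≤ stabilizer SL(2, ZMod p) x := by
  obtain ⟨u, hu⟩ := exists_prime_orderOf_dvd_card' p hpH
  have hu' : orderOf (u : SL(2, ZMod p)) = p := (orderOf_submonoid u).trans hu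
  obtain ⟨x, hx⟩ :=
    exists_mem_lineStab_of_pow_eq_one p (hu' ▸ pow_orderOf_eq_one (u : SL(2, ZMod p)))
  have hu1 : (u : SL(2, ZMod p)) ≠ 1 := by
    intro h
    rw [h, orderOf_one] at hu'
    exact (Fact.out : p.Prime).one_lt.ne hu'
  exact ⟨x, le_stabilizer_of_lineStab_le hH
    ((lineStab_le_zpowers hx hu1).trans (Subgroup.zpowers_le.2 u.2))⟩

theorem sub_one_mul_sub_one_of_mem_lineStab {A : SL(2, F)} {x : ℙ F (Fin 2 → F)}
    (hA : A ∈ lineStab x.submodule) :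
    ((A : Matrix (Fin 2) (Fin 2) F) - 1) * ((A : Matrix (Fin 2) (Fin 2) F) - 1) = 0 := by
  have hfix := lineStab_fix_of_span _ x.rep_nonzero A (x.submodule_eq ▸ hA)
  refine ext_iff_mulVec.2 fun w => ?_
  obtain ⟨c, hc⟩ := Submodule.mem_span_singleton.1 (x.submodule_eq ▸ hA w)
  have hN (y : Fin 2 → F) : ((A : Matrix (Fin 2) (Fin 2) F) - 1) *ᵥ y = A • y - y := by
    rw [sub_mulVec, one_mulVec, SpecialLinearGroup.smul_def, smul_eq_mulVec]
  rw [← mulVec_mulVec, hN w, ← hc, hN, smul_comm, hfix, sub_self, zero_mulVec]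

theorem coe_pow_of_mem_lineStab {A : SL(2, F)} {x : ℙ F (Fin 2 → F)}
    (hA : A ∈ lineStab x.submodule) (n : ℕ) :
    ((A ^ n : SL(2, F)) : Matrix (Fin 2) (Fin 2) F) =
      1 + (n : F) • ((A : Matrix (Fin 2) (Fin 2) F) - 1) := by
  have hN := sub_one_mul_sub_one_of_mem_lineStab hA
  induction n with
  | zero => simp
  | succ n ih =>
    rw [pow_succ, coe_mul, ih]
    set N := (A : Matrix (Fin 2) (Fin 2) F) - 1
    have hAN : (A : Matrix (Fin 2) (Fin 2) F) = 1 + N := by simp [N]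
    rw [hAN, mul_add, add_mul, add_mul, smul_mul_assoc (n : F) N N, hN, Nat.cast_succ,
      add_smul, one_smul]
    simp only [mul_one, one_mul, smul_zero, add_zero]
    abel

theorem eq_one_of_mem_lineStab_of_pow_mem_center {A : SL(2, F)} {x : ℙ F (Fin 2 → F)}
    (hA : A ∈ lineStab x.submodule) {n : ℕ} (hn : A ^ n ∈ Subgroup.center SL(2, F))
    (hnF : (n : F) ≠ 0) : A = 1 := by
  obtain ⟨r, -, hr⟩ := mem_center_iff.1 hn
  have hN := sub_one_mul_sub_one_of_mem_lineStab hA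
  set N := (A : Matrix (Fin 2) (Fin 2) F) - 1
  have hnN : (n : F) • N = (r - 1) • 1 := by
    rw [sub_smul, one_smul, smul_one_eq_diagonal, ← scalar_apply, hr, coe_pow_of_mem_lineStab hA]
    abel
  have hrN : (r - 1) • N = 0 := by
    simpa [mul_smul_comm, hN] using (congrArg (N * ·) hnN).symm
  have hN0 : N = 0 := by
    rcases smul_eq_zero.1 hrN with hr1 | hN0
    · simpa [hr1, hnF] using hnN
    · exact hN0
  exact Subtype.ext (sub_eq_zero.1 hN0)

theorem mk_eq_mk_of_smul_eq_smul {g : SL(2, F)} (hg : g ∉ Subgroup.center SL(2, F)) {κ : F}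
    {u v : Fin 2 → F} (hu : u ≠ 0) (hv : v ≠ 0) (hgu : g • u = κ • u) (hgv : g • v = κ • v) :
    Projectivization.mk F u hu = .mk F v hv := by
  have hA : (g : Matrix (Fin 2) (Fin 2) F) - κ • 1 ≠ 0 := by
    intro h
    refine hg (mem_center_iff.2 ⟨κ, ?_, ?_⟩)
    · have := g.det_coe
      rw [sub_eq_zero.1 h] at this
      simpa [det_smul] using this
    · rw [sub_eq_zero.1 h, scalar_apply, smul_one_eq_diagonal]
  obtain ⟨a, ha⟩ := exists_smul_eq_of_mulVec_eq_zero hA hv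
    (smul_eq_smul_iff_mulVec_eq_zero.1 hgv) (smul_eq_smul_iff_mulVec_eq_zero.1 hgu)
  exact (Projectivization.mk_eq_mk_iff' F u v hu hv).2 ⟨a, ha⟩

theorem mem_center_of_smul_eq_smul {g : SL(2, F)} {m : ℕ} (hm : g ^ m = 1) (hmF : (m : F) ≠ 0)
    {c : F} (hc : c * c = 1) {v : Fin 2 → F} (hv : v ≠ 0) (hgv : g • v = c • v) :
    g ∈ Subgroup.center SL(2, F) := by
  let z : SL(2, F) := ⟨c • 1, by simp [sq, hc]⟩
  have hz : z ∈ Subgroup.center SL(2, F) :=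
    mem_center_iff.2 ⟨c, by simp [← hc, sq], by simp [z, smul_one_eq_diagonal]⟩
  have hc0 : c ≠ 0 := left_ne_zero_of_mul_eq_one hc
  have hfix : (g * z⁻¹) • v = v := by
    rw [mul_smul, inv_smul_eq_of_smul_eq hc0 (g := z)
      (by rw [SpecialLinearGroup.smul_def, smul_eq_mulVec]; simp [z, smul_mulVec]),
      smul_comm, hgv, smul_smul, inv_mul_cancel₀ hc0, one_smul]
  have hpow : (g * z⁻¹) ^ m ∈ Subgroup.center SL(2, F) := by
    rw [Commute.mul_pow (Subgroup.mem_center_iff.1 (inv_mem hz) g), hm, one_mul]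
    exact pow_mem (inv_mem hz) m
  have h1 := eq_one_of_mem_lineStab_of_pow_mem_center (x := .mk F v hv)
    (by rw [Projectivization.submodule_mk, mem_lineStab_span_iff hv]; exact hfix) hpow hmF
  rwa [mul_inv_eq_one.1 h1]

theorem fixedBy_eq_pair {g : SL(2, F)} (hg : g ∉ Subgroup.center SL(2, F)) {c : F}
    (hc : c ^ 2 - (g : Matrix (Fin 2) (Fin 2) F).trace * c + 1 = 0) {v w : Fin 2 → F}
    (hv : v ≠ 0) (hw : w ≠ 0) (hgv : g • v = c • v) (hgw : g • w = c⁻¹ • w) :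
    fixedBy (ℙ F (Fin 2 → F)) g = {.mk F v hv, .mk F w hw} := by
  have hc0 : c ≠ 0 := by
    rintro rfl
    simp at hc
  refine Set.ext fun x => ⟨fun hx => ?_, ?_⟩
  · induction x using Projectivization.ind with | _ u hu => ?_
    obtain ⟨κ, hκ⟩ := (smul_mk_eq_self_iff hu).1 hx
    have h := exists_smul_eq_smul_iff.1 ⟨u, hu, hκ⟩
    have : (κ - c) * (κ - c⁻¹) = 0 := by
      field_simp
      linear_combination c * h - κ * hc
    rcases mul_eq_zero.1 this with h | h
    · exact .inl (mk_eq_mk_of_smul_eq_smul hg hu hv hκ (sub_eq_zero.1 h ▸ hgv))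
    · exact .inr (mk_eq_mk_of_smul_eq_smul hg hu hw hκ (sub_eq_zero.1 h ▸ hgw))
  · rintro (rfl | rfl)
    · exact (smul_mk_eq_self_iff hv).2 ⟨c, hgv⟩
    · exact (smul_mk_eq_self_iff hw).2 ⟨c⁻¹, hgw⟩

open Polynomial in
theorem card_fixedBy_eq_two {K : Type*} [Field K] [IsAlgClosed K] {g : SL(2, K)}
    (hg : g ∉ Subgroup.center SL(2, K)) {m : ℕ} (hm : g ^ m = 1) (hmK : (m : K) ≠ 0) :
    Nat.card (fixedBy (ℙ K (Fin 2 → K)) g) = 2 := by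
  set t := (g : Matrix (Fin 2) (Fin 2) K).trace
  obtain ⟨c, hc⟩ : ∃ c : K, c ^ 2 - t * c + 1 = 0 := by
    obtain ⟨c, hc⟩ := IsAlgClosed.exists_root (X ^ 2 - C t * X + 1 : K[X])
      (by rw [show (X ^ 2 - C t * X + 1 : K[X]).degree = 2 by compute_degree!]; decide)
    exact ⟨c, by simpa using hc⟩
  have hc0 : c ≠ 0 := by
    rintro rfl
    simp at hc
  have hc' : c⁻¹ ^ 2 - t * c⁻¹ + 1 = 0 := by
    field_simp
    linear_combination hc
  obtain ⟨v, hv, hgv⟩ := exists_smul_eq_smul_iff.2 hc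
  obtain ⟨w, hw, hgw⟩ := exists_smul_eq_smul_iff.2 hc'
  have hcc : c ≠ c⁻¹ := fun h => hg (mem_center_of_smul_eq_smul hm hmK
    (by nth_rewrite 2 [h]; exact mul_inv_cancel₀ hc0) hv hgv)
  have hvw : Projectivization.mk K v hv ≠ .mk K w hw := by
    rw [Ne, Projectivization.mk_eq_mk_iff']
    rintro ⟨a, rfl⟩
    rw [smul_comm, hgw, smul_comm] at hgv
    exact hcc (smul_left_injective K hv hgv).symm
  rw [fixedBy_eq_pair hg hc hv hw hgv hgw, Nat.card_coe_set_eq, Set.ncard_pair hvw]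

theorem isMetabelian_of_ncard_orbit_le_two {G : Subgroup SL(2, F)} [Finite G]
    (hG : (Nat.card G : F) ≠ 0) {x : ℙ F (Fin 2 → F)} (hx : (orbit G x).ncard ≤ 2) :
    IsMetabelian G := by
  refine IsMetabelian.of_commutatorElement_mem (stabilizer G x) (fun a ha b hb => ?_)
    (Subgroup.commutatorElement_mem_of_index_le_two (index_stabilizer G x ▸ hx))
  -- `⁅a, b⁆` is a transvection whose order divides `|G|`, which is invertible in `F`
  have hab := commutatorElement_mem_lineStab (x := x) (g := a) (h := b) ha hb
  refine commutatorElement_eq_one_iff_commute.1 (Subtype.ext ?_)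
  refine eq_one_of_mem_lineStab_of_pow_mem_center hab (n := Nat.card G) ?_ hG
  change ((⁅a, b⁆ ^ Nat.card G : G) : SL(2, F)) ∈ _
  rw [pow_card_eq_one']
  exact one_mem _

instance : Finite (Subgroup.center SL(2, F)) :=
  .of_equiv _ (center_equiv_rootsOfUnity' 0).symm.toEquiv

theorem card_center_le_two : Nat.card (Subgroup.center SL(2, F)) ≤ 2 :=
  (Nat.card_congr (center_equiv_rootsOfUnity' 0).toEquiv).trans_le (card_rootsOfUnity F _)

theorem ker_toPermHom_eq_comap_center (G : Subgroup SL(2, F)) :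
    (toPermHom G (ℙ F (Fin 2 → F))).ker = (Subgroup.center SL(2, F)).comap G.subtype := by
  rw [show toPermHom G (ℙ F (Fin 2 → F)) = (toPermHom SL(2, F) _).comp G.subtype from rfl,
    ← MonoidHom.comap_ker, Projectivization.SL_mulAction_ker]

theorem card_ker_toPermHom_le_two (G : Subgroup SL(2, F)) :
    Nat.card (toPermHom G (ℙ F (Fin 2 → F))).ker ≤ 2 := by
  rw [ker_toPermHom_eq_comap_center]
  refine (Nat.card_le_card_of_injective (fun g => (⟨g.1.1, g.2⟩ : Subgroup.center SL(2, F)))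
    fun g h hgh => ?_).trans card_center_le_two
  exact Subtype.ext (Subtype.ext (by simpa using congrArg Subtype.val hgh))

theorem isMetabelian_or_card_dvd_of_natCast_card_ne_zero {K : Type*} [Field K] [IsAlgClosed K]
    (G : Subgroup SL(2, K)) [Finite G] (hG : (Nat.card G : K) ≠ 0) :
    IsMetabelian G ∨ Nat.card G ∣ 240 := by
  refine or_iff_not_imp_left.2 fun hmeta => ?_
  set f := toPermHom G (ℙ K (Fin 2 → K))
  have hcard := card_range_toPermHom_eq_of_card_fixedBy_eq_two (G := G) (X := ℙ K (Fin 2 → K))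
    (fun g hg => card_fixedBy_eq_two (fun h => hg (ker_toPermHom_eq_comap_center G ▸ h))
      (m := Nat.card G)
      (by rw [← Subgroup.coe_pow, pow_card_eq_one', Subgroup.coe_one]) hG)
    fun x => by
      by_contra! h
      exact hmeta (isMetabelian_of_ncard_orbit_le_two hG (x := x) (by omega))
  have hker₁ : 0 < Nat.card f.ker := Nat.card_pos
  have hker₂ : Nat.card f.ker ≤ 2 := card_ker_toPermHom_le_two G
  rw [← Subgroup.card_mul_index f.ker, Subgroup.index_ker]
  interval_cases Nat.card f.ker <;> rcases hcard with h | h | h <;> rw [h] <;> decide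

end Matrix.SpecialLinearGroup

theorem stmt13 (p : ℕ) (hp : p.Prime)
    (H : Subgroup (Matrix.SpecialLinearGroup (Fin 2) (ZMod p))) (hH : H ≠ ⊤) :
    (∀ a b c d : H, ⁅⁅a, b⁆, ⁅c, d⁆⁆ = 1) ∨ Nat.card H ∣ 240 := by
  have : Fact p.Prime := ⟨hp⟩
  by_cases hpH : p ∣ Nat.card H
  · obtain ⟨x, hx⟩ := SpecialLinearGroup.exists_le_stabilizer_of_dvd_card hH hpH
    exact .inl (SpecialLinearGroup.isMetabelian_of_le_stabilizer hx)
  let K := AlgebraicClosure (ZMod p)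
  let ρ := SpecialLinearGroup.map (n := Fin 2) (algebraMap (ZMod p) K)
  let e := H.equivMapOfInjective ρ (SpecialLinearGroup.map_injective (RingHom.injective _))
  have : Finite (H.map ρ) := .of_equiv _ e.toEquiv
  have hcard : Nat.card (H.map ρ) = Nat.card H := Nat.card_congr e.symm.toEquiv
  have hK : (Nat.card (H.map ρ) : K) ≠ 0 := by
    rwa [hcard, Ne, CharP.cast_eq_zero_iff K p]
  rcases SpecialLinearGroup.isMetabelian_or_card_dvd_of_natCast_card_ne_zero (H.map ρ) hK with
    h | h
  · exact .inl (h.of_injective (f := e.toMonoidHom) e.injective)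
  · exact .inr (hcard ▸ h)
end

section
/- Let X be a nonempty, compact, metrizable, totally disconnected, perfect topological space (a Cantor space), let G be a group and let α : G → Homeo(X) be an action of G on X by homeomorphisms. Let T(α) be the topological full group of α. Suppose x ∈ X has infinite orbit Orb(x) = {α(g)(x) : g ∈ G}. Then T(α) preserves Orb(x) and acts highly transitively on it: for every n ≥ 1 and all n-tuples (y₁,…,y_n) and (z₁,…,z_n) of pairwise distinct points of Orb(x), there exists φ ∈ T(α) with φ(yᵢ) = zᵢ for all 1 ≤ i ≤ n. -/
/-!
An element of the topological full group is exactly a homeomorphism of the form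
`z ↦ α (c z) z` with `c : X → G` locally constant (compactness makes `c` finitely valued), so it
preserves every orbit. Given `a ≠ b = α h a` and a finite set `F` avoiding both, compactness and
total disconnectedness give a clopen neighbourhood `U` of `a` disjoint from `α h '' U` with `U`
and `α h '' U` both avoiding `F`; the involution acting by `h` on `U`, by `h⁻¹` on `α h '' U` and
trivially elsewhere lies in the topological full group, sends `a` to `b` and fixes `F`. Composing
such moves, one coordinate at a time, realizes any injective tuple map within an orbit.
-/

/-- `φ` belongs to the topological full group of the action `α` of `G` on `X`:
there are a finite partition of `X` into nonempty clopen sets `C₁, …, C_p` and elements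
`g₁, …, g_p ∈ G` such that `φ` agrees with `α(gᵢ)` on `Cᵢ` for each `i`. -/
def InTopFullGroup {X : Type*} [TopologicalSpace X] {G : Type*} [Group G]
    (α : G → X ≃ₜ X) (φ : X ≃ₜ X) : Prop :=
  ∃ (p : ℕ) (C : Fin p → Set X) (g : Fin p → G),
    (∀ i, IsClopen (C i)) ∧ (∀ i, (C i).Nonempty) ∧
    (∀ i j, i ≠ j → Disjoint (C i) (C j)) ∧ (⋃ i, C i) = Set.univ ∧
    ∀ i, ∀ x ∈ C i, φ x = α (g i) x

section TopFullGroup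

variable {X : Type*} [TopologicalSpace X]

lemma exists_isClopen_disjoint_image [CompactSpace X] [T2Space X] [TotallyDisconnectedSpace X]
    (f : X ≃ₜ X) {a : X} (ha : f a ≠ a) {O : Set X} (hO : IsOpen O) (haO : a ∈ O) :
    ∃ U, IsClopen U ∧ a ∈ U ∧ U ⊆ O ∧ Disjoint U (f '' U) := by
  obtain ⟨B, A, hB, hA, hfaB, haA, hBA⟩ := t2_separation ha
  obtain ⟨U, hU, haU, hUO⟩ := compact_exists_isClopen_in_isOpen
    ((hO.inter hA).inter (hB.preimage f.continuous)) ⟨⟨haO, haA⟩, hfaB⟩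
  refine ⟨U, hU, haU, fun z hz => (hUO hz).1.1, hBA.symm.mono (fun z hz => (hUO hz).1.2) ?_⟩
  exact Set.image_subset_iff.2 fun z hz => (hUO hz).2

variable {G : Type*} {α : G → X ≃ₜ X}

lemma continuous_apply_locallyConstant (c : LocallyConstant X G) :
    Continuous fun z => α (c z) z :=
  continuous_iff_continuousAt.2 fun z => (α (c z)).continuous.continuousAt.congr <|
    (c.isLocallyConstant.eventually_eq z).mono fun y (hy : c y = c z) => by simp only [hy]

variable [Group G]

lemma apply_one_of_map_mul (hmul : ∀ g h : G, ∀ p : X, α (g * h) p = α g (α h p)) (p : X) :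
    α 1 p = p :=
  (α 1).injective (by rw [← hmul, one_mul])

lemma apply_inv_apply_of_map_mul (hmul : ∀ g h : G, ∀ p : X, α (g * h) p = α g (α h p))
    (g : G) (p : X) : α g⁻¹ (α g p) = p := by
  rw [← hmul, inv_mul_cancel, apply_one_of_map_mul hmul]

lemma exists_apply_eq_of_mem_range (hmul : ∀ g h : G, ∀ p : X, α (g * h) p = α g (α h p))
    {x a b : X} (ha : a ∈ Set.range fun g : G => α g x) (hb : b ∈ Set.range fun g : G => α g x) :
    ∃ h : G, α h a = b := by
  obtain ⟨g, rfl⟩ := ha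
  obtain ⟨g', rfl⟩ := hb
  exact ⟨g' * g⁻¹, by rw [hmul, apply_inv_apply_of_map_mul hmul]⟩

lemma InTopFullGroup.exists_locallyConstant {φ : X ≃ₜ X} (hφ : InTopFullGroup α φ) :
    ∃ c : LocallyConstant X G, ∀ z, φ z = α (c z) z := by
  obtain ⟨p, C, g, hclopen, -, hdisj, hcover, hφ⟩ := hφ
  have hmem : ∀ z, ∃ i, z ∈ C i := fun z => Set.mem_iUnion.mp (hcover ▸ Set.mem_univ z)
  choose piece hpiece using hmem
  have piece_eq : ∀ {i z}, z ∈ C i → piece z = i := fun {i z} hz =>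
    by_contra fun hne => Set.disjoint_left.mp (hdisj _ _ hne) (hpiece z) hz
  refine ⟨⟨fun z => g (piece z), (IsLocallyConstant.iff_exists_open _).2 fun z => ?_⟩,
    fun z => hφ _ z (hpiece z)⟩
  exact ⟨C (piece z), (hclopen _).isOpen, hpiece z, fun y hy => by rw [piece_eq hy]⟩

lemma inTopFullGroup_of_locallyConstant [CompactSpace X] {φ : X ≃ₜ X} (c : LocallyConstant X G)
    (hc : ∀ z, φ z = α (c z) z) : InTopFullGroup α φ := by
  obtain ⟨p, g, hg, hrange⟩ := c.range_finite.fin_param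
  have hg_mem : ∀ z, c z ∈ Set.range g := fun z => hrange ▸ Set.mem_range_self z
  refine ⟨p, fun i => c ⁻¹' {g i}, g, fun i => c.isLocallyConstant.isClopen_fiber _,
    fun i => ?_, fun i j hij => ?_, ?_, fun i z hz => hz ▸ hc z⟩
  · obtain ⟨z, hz⟩ : g i ∈ Set.range c := hrange ▸ Set.mem_range_self i
    exact ⟨z, hz⟩
  · exact (Set.disjoint_singleton.mpr (hg.ne hij)).preimage c
  · exact Set.eq_univ_of_forall fun z =>
      let ⟨i, hi⟩ := hg_mem z
      Set.mem_iUnion.mpr ⟨i, hi.symm⟩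

lemma InTopFullGroup.apply_mem_range (hmul : ∀ g h : G, ∀ p : X, α (g * h) p = α g (α h p))
    {φ : X ≃ₜ X} (hφ : InTopFullGroup α φ) {x y : X} (hy : y ∈ Set.range fun g : G => α g x) :
    φ y ∈ Set.range fun g : G => α g x := by
  obtain ⟨c, hc⟩ := hφ.exists_locallyConstant
  obtain ⟨g, rfl⟩ := hy
  exact ⟨c (α g x) * g, by simp only [hc, hmul]⟩

variable [CompactSpace X]

lemma inTopFullGroup_refl (hmul : ∀ g h : G, ∀ p : X, α (g * h) p = α g (α h p)) :
    InTopFullGroup α (Homeomorph.refl X) :=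
  inTopFullGroup_of_locallyConstant 1 fun z => (apply_one_of_map_mul hmul z).symm

lemma InTopFullGroup.trans (hmul : ∀ g h : G, ∀ p : X, α (g * h) p = α g (α h p))
    {φ ψ : X ≃ₜ X} (hφ : InTopFullGroup α φ) (hψ : InTopFullGroup α ψ) :
    InTopFullGroup α (φ.trans ψ) := by
  obtain ⟨c, hc⟩ := hφ.exists_locallyConstant
  obtain ⟨d, hd⟩ := hψ.exists_locallyConstant
  refine inTopFullGroup_of_locallyConstant (d.comap (φ : C(X, X)) * c) fun z => ?_
  simp [hc, hd, hmul]

lemma InTopFullGroup.symm (hmul : ∀ g h : G, ∀ p : X, α (g * h) p = α g (α h p))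
    {φ : X ≃ₜ X} (hφ : InTopFullGroup α φ) : InTopFullGroup α φ.symm := by
  obtain ⟨c, hc⟩ := hφ.exists_locallyConstant
  refine inTopFullGroup_of_locallyConstant (c.comap (φ.symm : C(X, X)))⁻¹ fun z => ?_
  obtain ⟨w, rfl⟩ := φ.surjective z
  simp only [LocallyConstant.inv_apply, LocallyConstant.coe_comap, ContinuousMap.coe_coe,
    Function.comp_apply, φ.symm_apply_apply]
  rw [hc, apply_inv_apply_of_map_mul hmul]

lemma exists_inTopFullGroup_eqOn_of_disjoint_image
    (hmul : ∀ g h : G, ∀ p : X, α (g * h) p = α g (α h p)) (h : G) {U : Set X} (hU : IsClopen U)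
    (hdisj : Disjoint U (α h '' U)) :
    ∃ σ : X ≃ₜ X, InTopFullGroup α σ ∧ Set.EqOn σ (α h) U ∧ ∀ z ∉ U ∪ α h '' U, σ z = z := by
  have hV : IsClopen (α h '' U) := ⟨(α h).isClosed_image.2 hU.1, (α h).isOpen_image.2 hU.2⟩
  let c : LocallyConstant X G :=
    (LocallyConstant.const X h).mulIndicator hU * (LocallyConstant.const X h⁻¹).mulIndicator hV
  let f : X → X := fun z => α (c z) z
  have f_of_mem : ∀ z ∈ U, f z = α h z := fun z hz => by
    simp [f, c, hz, Set.disjoint_left.mp hdisj hz]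
  have f_apply_of_mem : ∀ z ∈ U, f (α h z) = z := fun z hz => by
    have : α h z ∉ U := fun hz' => Set.disjoint_left.mp hdisj hz' (Set.mem_image_of_mem _ hz)
    simpa [f, c, this, Set.mem_image_of_mem _ hz] using apply_inv_apply_of_map_mul hmul h z
  have f_of_notMem : ∀ z ∉ U ∪ α h '' U, f z = z := fun z hz => by
    simp only [Set.mem_union, not_or] at hz
    simp [f, c, hz.1, hz.2, apply_one_of_map_mul hmul]
  have hf : Function.Involutive f := by
    intro z
    by_cases hzU : z ∈ U
    · rw [f_of_mem z hzU, f_apply_of_mem z hzU]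
    by_cases hzV : z ∈ α h '' U
    · obtain ⟨u, hu, rfl⟩ := hzV
      rw [f_apply_of_mem u hu, f_of_mem u hu]
    · rw [f_of_notMem z (by simp [hzU, hzV]), f_of_notMem z (by simp [hzU, hzV])]
  let σ : X ≃ₜ X :=
    ⟨hf.toPerm f, continuous_apply_locallyConstant c, continuous_apply_locallyConstant c⟩
  exact ⟨σ, inTopFullGroup_of_locallyConstant c fun z => rfl, f_of_mem, f_of_notMem⟩

variable [T2Space X] [TotallyDisconnectedSpace X]

lemma exists_inTopFullGroup_apply_eq_fixing
    (hmul : ∀ g h : G, ∀ p : X, α (g * h) p = α g (α h p)) (h : G) {a : X} {F : Set X}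
    (hF : F.Finite) (haF : a ∉ F) (hhaF : α h a ∉ F) :
    ∃ σ : X ≃ₜ X, InTopFullGroup α σ ∧ σ a = α h a ∧ ∀ w ∈ F, σ w = w := by
  by_cases hfix : α h a = a
  · exact ⟨Homeomorph.refl X, inTopFullGroup_refl hmul, hfix.symm, fun _ _ => rfl⟩
  obtain ⟨U, hU, haU, hUF, hdisj⟩ := exists_isClopen_disjoint_image (α h) hfix
    (hF.isClosed.isOpen_compl.inter (hF.isClosed.isOpen_compl.preimage (α h).continuous))
    ⟨haF, hhaF⟩
  obtain ⟨σ, hσ, hσU, hσfix⟩ := exists_inTopFullGroup_eqOn_of_disjoint_image hmul h hU hdisj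
  refine ⟨σ, hσ, hσU haU, fun w hw => hσfix w ?_⟩
  rintro (hwU | ⟨u, hu, rfl⟩)
  exacts [(hUF hwU).1 hw, (hUF hu).2 hw]

lemma exists_inTopFullGroup_apply_eq_tuple
    (hmul : ∀ g h : G, ∀ p : X, α (g * h) p = α g (α h p)) (x : X) :
    ∀ (n : ℕ) (y z : Fin n → X), (∀ i, y i ∈ Set.range fun g : G => α g x) →
      (∀ i, z i ∈ Set.range fun g : G => α g x) → Function.Injective y →
      Function.Injective z → ∃ φ : X ≃ₜ X, InTopFullGroup α φ ∧ ∀ i, φ (y i) = z i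
  | 0, _, _, _, _, _, _ => ⟨Homeomorph.refl X, inTopFullGroup_refl hmul, fun i => i.elim0⟩
  | n + 1, y, z, hy, hz, hyinj, hzinj => by
    obtain ⟨φ, hφ, hφyz⟩ := exists_inTopFullGroup_apply_eq_tuple hmul x n
      (fun i => y i.succ) (fun i => z i.succ) (fun i => hy _) (fun i => hz _)
      (hyinj.comp (Fin.succ_injective n)) (hzinj.comp (Fin.succ_injective n))
    obtain ⟨h, hh⟩ := exists_apply_eq_of_mem_range hmul (hφ.apply_mem_range hmul (hy 0)) (hz 0)
    have hφy0 : φ (y 0) ∉ Set.range fun i : Fin n => z i.succ := by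
      rintro ⟨i, hi : z i.succ = φ (y 0)⟩
      rw [← hφyz i] at hi
      exact Fin.succ_ne_zero i (hyinj (φ.injective hi))
    have hz0 : z 0 ∉ Set.range fun i : Fin n => z i.succ :=
      fun ⟨i, hi⟩ => Fin.succ_ne_zero i (hzinj hi)
    obtain ⟨σ, hσ, hσ0, hσfix⟩ := exists_inTopFullGroup_apply_eq_fixing hmul h
      (Set.finite_range _) hφy0 (hh ▸ hz0)
    refine ⟨φ.trans σ, hφ.trans hmul hσ, Fin.cases ?_ fun i => ?_⟩
    · rw [Homeomorph.trans_apply, hσ0, hh]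
    · rw [Homeomorph.trans_apply, hφyz, hσfix _ (Set.mem_range_self i)]

end TopFullGroup

theorem stmt16_general (X : Type*) [TopologicalSpace X] [CompactSpace X]
    [TopologicalSpace.MetrizableSpace X] [TotallyDisconnectedSpace X]
    (G : Type*) [Group G] (α : G → X ≃ₜ X)
    (hmul : ∀ g h : G, ∀ p : X, α (g * h) p = α g (α h p))
    (x : X) :
    (∀ φ : X ≃ₜ X, InTopFullGroup α φ →
      ∀ y ∈ Set.range fun g : G => α g x, φ y ∈ Set.range fun g : G => α g x) ∧
    (∀ n : ℕ, 1 ≤ n → ∀ y z : Fin n → X,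
      (∀ i, y i ∈ Set.range fun g : G => α g x) →
      (∀ i, z i ∈ Set.range fun g : G => α g x) →
      Function.Injective y → Function.Injective z →
      ∃ φ : X ≃ₜ X, InTopFullGroup α φ ∧ ∀ i, φ (y i) = z i) :=
  ⟨fun _ hφ _ hy => hφ.apply_mem_range hmul hy,
    fun n _ => exists_inTopFullGroup_apply_eq_tuple hmul x n⟩

theorem stmt16 (X : Type*) [TopologicalSpace X] [Nonempty X] [CompactSpace X]
    [TopologicalSpace.MetrizableSpace X] [TotallyDisconnectedSpace X]
    (hperf : Perfect (Set.univ : Set X))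
    (G : Type*) [Group G] (α : G → X ≃ₜ X)
    (hone : α 1 = Homeomorph.refl X)
    (hmul : ∀ g h : G, ∀ p : X, α (g * h) p = α g (α h p))
    (x : X) (hinf : (Set.range fun g : G => α g x).Infinite) :
    (∀ φ : X ≃ₜ X, InTopFullGroup α φ →
      ∀ y ∈ Set.range fun g : G => α g x, φ y ∈ Set.range fun g : G => α g x) ∧
    (∀ n : ℕ, 1 ≤ n → ∀ y z : Fin n → X,
      (∀ i, y i ∈ Set.range fun g : G => α g x) →
      (∀ i, z i ∈ Set.range fun g : G => α g x) →
      Function.Injective y → Function.Injective z →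
      ∃ φ : X ≃ₜ X, InTopFullGroup α φ ∧ ∀ i, φ (y i) = z i) :=
  stmt16_general X G α hmul x
end

section
/- Let a = [[1,2],[0,1]] and b = [[1,0],[2,1]] in SL₂(ℤ). Then a and b freely generate a free subgroup of rank 2 of SL₂(ℤ) (the homomorphism from the free group on two generators sending them to a and b is injective with image ⟨a,b⟩), and the subgroup ⟨a,b⟩ has finite index in SL₂(ℤ). -/
/-- The Sanov matrix `a = [[1,2],[0,1]]` in `SL₂(ℤ)`. -/
def sanovA : Matrix.SpecialLinearGroup (Fin 2) ℤ :=
  ⟨!![1, 2; 0, 1], by simp [Matrix.det_fin_two_of]⟩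

/-- The Sanov matrix `b = [[1,0],[2,1]]` in `SL₂(ℤ)`. -/
def sanovB : Matrix.SpecialLinearGroup (Fin 2) ℤ :=
  ⟨!![1, 0; 2, 1], by simp [Matrix.det_fin_two_of]⟩

/-!
Freeness is ping-pong on the upper half-plane. Since `a = T²` and `b = S⁻¹ T⁻² S`, the element `a`
translates `Re z` by `2` and `b` translates `Re (S • z) = Re (-1/z)` by `-2`. So `a` maps the
complement of `{Re z < -1}` into `{Re z ≥ 1}` and `a⁻¹` maps the complement of `{Re z ≥ 1}` into
`{Re z < -1}`; likewise for `b` with the horodiscs `{Re (-1/z) > 1}` and `{Re (-1/z) ≤ -1}` at `0`,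
which lie over `-1 < Re z < 0` and `0 < Re z < 1`. The same works for `Tᵐ` and `S⁻¹ T⁻ᵐ S`
whenever `|m| ≥ 2`.

For the finite index, a Euclidean algorithm on the first column, multiplying on the left by
`a^{±1}` and `b^{±1}`, shows that every `g ≡ 1 (mod 2)` with `g₀₀ ≡ 1 (mod 4)` lies in `⟨a, b⟩`.
So `⟨a, b⟩` contains the principal congruence subgroup `Γ(4)`.
-/

open scoped MatrixGroups Pointwise
open ModularGroup Matrix.SpecialLinearGroup

section Translation

variable {G α : Type*} [Group G] [MulAction G α]

lemma smul_compl_subset_of_map_smul_eq_add {g : G} {f : α → ℝ} {c : ℝ}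
    (hf : ∀ z, f (g • z) = f z + c) :
    g • {z | c * f z < -(c ^ 2 / 2)}ᶜ ⊆ {z | c ^ 2 / 2 ≤ c * f z} := by
  rintro _ ⟨z, hz, rfl⟩
  simp only [Set.mem_compl_iff, Set.mem_ofPred_eq, not_lt] at hz ⊢
  rw [hf]
  nlinarith

lemma inv_smul_compl_subset_of_map_smul_eq_add {g : G} {f : α → ℝ} {c : ℝ}
    (hf : ∀ z, f (g • z) = f z + c) :
    g⁻¹ • {z | c ^ 2 / 2 ≤ c * f z}ᶜ ⊆ {z | c * f z < -(c ^ 2 / 2)} := by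
  rintro _ ⟨z, hz, rfl⟩
  have hinv : f (g⁻¹ • z) = f z - c := by
    have := hf (g⁻¹ • z)
    rw [smul_inv_smul] at this
    linarith
  simp only [Set.mem_compl_iff, Set.mem_ofPred_eq, not_le] at hz ⊢
  rw [hinv]
  nlinarith

end Translation

namespace UpperHalfPlane

lemma re_T_zpow_smul (z : ℍ) (n : ℤ) : (T ^ n • z).re = z.re + n := by
  rw [modular_T_zpow_smul, vadd_re, add_comm]

lemma re_S_smul (z : ℍ) : (S • z).re = -z.re / Complex.normSq z := by
  rw [modular_S_smul, ← coe_re, coe_mk, Complex.inv_re, Complex.normSq_neg, Complex.neg_re,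
    coe_re]

lemma normSq_coe (z : ℍ) : Complex.normSq z = z.re ^ 2 + z.im ^ 2 := by
  rw [Complex.normSq_apply, coe_re, coe_im, sq, sq]

lemma mul_re_mem_Ioo_of_le_mul_re_S_smul {z : ℍ} {c : ℝ} (hc : c ≠ 0)
    (h : c ^ 2 / 2 ≤ c * (S • z).re) : c * z.re ∈ Set.Ioo (-2) 0 := by
  rw [re_S_smul, mul_div_assoc', le_div_iff₀ (Complex.normSq_pos.2 (ne_zero z)), normSq_coe] at h
  have := mul_pos (sq_pos_of_ne_zero hc) (pow_pos z.im_pos 2)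
  constructor <;> nlinarith [sq_nonneg (c * z.re)]

lemma mul_re_mem_Ioo_of_mul_re_S_smul_lt {z : ℍ} {c : ℝ} (hc : c ≠ 0)
    (h : c * (S • z).re < -(c ^ 2 / 2)) : c * z.re ∈ Set.Ioo 0 2 := by
  rw [re_S_smul, mul_div_assoc', div_lt_iff₀ (Complex.normSq_pos.2 (ne_zero z)), normSq_coe] at h
  have := mul_pos (sq_pos_of_ne_zero hc) (pow_pos z.im_pos 2)
  constructor <;> nlinarith [sq_nonneg (c * z.re)]

end UpperHalfPlane

open UpperHalfPlane in
theorem ModularGroup.injective_lift_T_zpow_conj (m : ℤ) (hm : 2 ≤ |m|) :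
    Function.Injective
      (FreeGroup.lift fun i : Bool => if i then T ^ m else S⁻¹ * T ^ (-m) * S) := by
  have hm0 : (m : ℝ) ≠ 0 := by norm_cast; rintro rfl; simp at hm
  have hm4 : (4 : ℝ) ≤ (m : ℝ) ^ 2 := by
    rw [← sq_abs, ← Int.cast_abs]
    nlinarith [show (2 : ℝ) ≤ (|m| : ℤ) by exact_mod_cast hm]
  let P (f : ℍ → ℝ) (c : ℝ) : Set ℍ := {z | c ^ 2 / 2 ≤ c * f z}
  let Q (f : ℍ → ℝ) (c : ℝ) : Set ℍ := {z | c * f z < -(c ^ 2 / 2)}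
  let X (i : Bool) : Set ℍ := if i then P re m else P (fun z => (S • z).re) (-m)
  let Y (i : Bool) : Set ℍ := if i then Q re m else Q (fun z => (S • z).re) (-m)
  -- The four sets lie over the disjoint intervals `[2, ∞)`, `(0, 2)`, `(-∞, -2)`, `(-2, 0)`
  -- of `m * Re z`.
  have hXtrue {z} (hz : z ∈ X true) : 2 ≤ m * z.re := by
    simp only [X, P, if_true, Set.mem_ofPred_eq] at hz; linarith
  have hXfalse {z} (hz : z ∈ X false) : m * z.re ∈ Set.Ioo 0 2 := by
    have := mul_re_mem_Ioo_of_le_mul_re_S_smul (neg_ne_zero.2 hm0) hz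
    constructor <;> linarith [this.1, this.2]
  have hYtrue {z} (hz : z ∈ Y true) : m * z.re < -2 := by
    simp only [Y, Q, if_true, Set.mem_ofPred_eq] at hz; linarith
  have hYfalse {z} (hz : z ∈ Y false) : m * z.re ∈ Set.Ioo (-2) 0 := by
    have := mul_re_mem_Ioo_of_mul_re_S_smul_lt (neg_ne_zero.2 hm0) hz
    constructor <;> linarith [this.1, this.2]
  have hX_pos (i : Bool) {z} (hz : z ∈ X i) : 0 < m * z.re := by
    cases i
    · exact (hXfalse hz).1
    · linarith [hXtrue hz]
  have hY_neg (i : Bool) {z} (hz : z ∈ Y i) : m * z.re < 0 := by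
    cases i
    · exact (hYfalse hz).2
    · linarith [hYtrue hz]
  have htrans_a (z : ℍ) : (T ^ m • z).re = z.re + m := re_T_zpow_smul z m
  have htrans_b (z : ℍ) : (S • (S⁻¹ * T ^ (-m) * S) • z).re = (S • z).re + -m := by
    rw [← mul_smul, ← mul_assoc, mul_inv_cancel_left, mul_smul, re_T_zpow_smul, Int.cast_neg]
  have hX : ∀ i,
      (fun i : Bool => if i then T ^ m else S⁻¹ * T ^ (-m) * S) i • (Y i)ᶜ ⊆ X i := by
    rintro (_ | _)
    · exact smul_compl_subset_of_map_smul_eq_add htrans_b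
    · exact smul_compl_subset_of_map_smul_eq_add htrans_a
  have hY : ∀ i,
      (fun i : Bool => if i then T ^ m else S⁻¹ * T ^ (-m) * S)⁻¹ i • (X i)ᶜ ⊆ Y i := by
    rintro (_ | _)
    · exact inv_smul_compl_subset_of_map_smul_eq_add htrans_b
    · exact inv_smul_compl_subset_of_map_smul_eq_add htrans_a
  refine FreeGroup.injective_lift_of_ping_pong _ X Y (fun i => ?_) ?_ ?_ ?_ hX hY
  · have hI : I ∈ (Y i)ᶜ := fun h => by simpa using hY_neg i h
    exact ⟨_, hX i (Set.smul_mem_smul_set hI)⟩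
  · rintro (_ | _) (_ | _) hij <;> simp only [ne_eq, not_true_eq_false] at hij
    all_goals refine Set.disjoint_left.2 fun z h1 h2 => ?_
    · linarith [hXtrue h2, (hXfalse h1).2]
    · linarith [hXtrue h1, (hXfalse h2).2]
  · rintro (_ | _) (_ | _) hij <;> simp only [ne_eq, not_true_eq_false] at hij
    all_goals refine Set.disjoint_left.2 fun z h1 h2 => ?_
    · linarith [hYtrue h2, (hYfalse h1).1]
    · linarith [hYtrue h1, (hYfalse h2).1]
  · exact fun i j => Set.disjoint_left.2 fun z h1 h2 => by linarith [hX_pos i h1, hY_neg j h2]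

lemma sanovA_eq_T_zpow : sanovA = T ^ (2 : ℤ) := by
  ext i j
  rw [coe_T_zpow]
  fin_cases i <;> fin_cases j <;> rfl

lemma sanovB_eq_conj_T_zpow : sanovB = S⁻¹ * T ^ (-2 : ℤ) * S := by
  ext i j
  rw [coe_mul, coe_mul, coe_T_zpow, S_inv, coe_neg, coe_S]
  fin_cases i <;> fin_cases j <;> simp [sanovB, Matrix.mul_apply, Fin.sum_univ_two]

lemma coe_sanovA_zpow_mul (k : ℤ) (g : SL(2, ℤ)) :
    ((sanovA ^ k * g : SL(2, ℤ)) : Matrix (Fin 2) (Fin 2) ℤ) =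
      !![g 0 0 + 2 * k * g 1 0, g 0 1 + 2 * k * g 1 1; g 1 0, g 1 1] := by
  rw [sanovA_eq_T_zpow, ← zpow_mul, coe_mul, coe_T_zpow, Matrix.eta_fin_two (g : Matrix _ _ ℤ),
    Matrix.mul_fin_two]
  simp

lemma coe_sanovB_zpow_mul (k : ℤ) (g : SL(2, ℤ)) :
    ((sanovB ^ k * g : SL(2, ℤ)) : Matrix (Fin 2) (Fin 2) ℤ) =
      !![g 0 0, g 0 1; g 1 0 + 2 * k * g 0 0, g 1 1 + 2 * k * g 0 1] := by
  have h := conj_zpow (i := k) (a := S⁻¹) (b := T ^ (-2 : ℤ))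
  rw [inv_inv] at h
  rw [sanovB_eq_conj_T_zpow, h, ← zpow_mul, coe_mul, coe_mul, coe_mul, coe_T_zpow, S_inv, coe_neg,
    coe_S]
  ext i j
  fin_cases i <;> fin_cases j <;> simp [Matrix.mul_apply, Fin.sum_univ_two] <;> ring

lemma eq_sanovA_zpow_of_apply_one_zero {g : SL(2, ℤ)} (h10 : g 1 0 = 0) (h00 : g 0 0 % 4 = 1)
    (h01 : g 0 1 % 2 = 0) : g = sanovA ^ (g 0 1 / 2) := by
  have hdet : g 0 0 * g 1 1 = 1 := by
    have := g.det_coe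
    rwa [Matrix.det_fin_two, h10, mul_zero, sub_zero] at this
  obtain ⟨h00', h11'⟩ : g 0 0 = 1 ∧ g 1 1 = 1 := by
    rcases Int.eq_one_or_neg_one_of_mul_eq_one' hdet with h | h
    · exact h
    · omega
  rw [← mul_one (sanovA ^ _)]
  ext i j
  rw [coe_sanovA_zpow_mul]
  fin_cases i <;> fin_cases j <;> simp [h00', h11', h10]; omega

lemma Int.exists_natAbs_add_two_mul_sign_lt {p r : ℤ} (hr : r ≠ 0) (hrp : r.natAbs < p.natAbs) :
    ∃ ε : ℤ, (ε = 1 ∨ ε = -1) ∧ (p + 2 * ε * r).natAbs < p.natAbs := by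
  by_cases h : (p + 2 * r).natAbs < p.natAbs
  · exact ⟨1, by omega⟩
  · exact ⟨-1, by omega⟩

theorem mem_closure_sanov_of_emod {g : SL(2, ℤ)} (h00 : g 0 0 % 4 = 1) (h01 : g 0 1 % 2 = 0)
    (h10 : g 1 0 % 2 = 0) : g ∈ Subgroup.closure {sanovA, sanovB} := by
  set H := Subgroup.closure {sanovA, sanovB}
  induction hN : (g 0 0).natAbs + (g 1 0).natAbs using Nat.strong_induction_on generalizing g with
  | _ N ih =>
  by_cases hg : g 1 0 = 0
  · rw [eq_sanovA_zpow_of_apply_one_zero hg h00 h01]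
    exact zpow_mem (Subgroup.subset_closure (by simp)) _
  suffices ∃ h ∈ H, (h * g) 0 0 % 4 = 1 ∧ (h * g) 0 1 % 2 = 0 ∧ (h * g) 1 0 % 2 = 0 ∧
      ((h * g) 0 0).natAbs + ((h * g) 1 0).natAbs < N by
    obtain ⟨h, hH, h00', h01', h10', hlt⟩ := this
    simpa using mul_mem (inv_mem hH) (ih _ hlt h00' h01' h10' rfl)
  rcases lt_or_gt_of_ne (show (g 1 0).natAbs ≠ (g 0 0).natAbs by omega) with hlt | hlt
  · obtain ⟨ε, hε, hdec⟩ := Int.exists_natAbs_add_two_mul_sign_lt hg hlt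
    refine ⟨sanovA ^ ε, zpow_mem (Subgroup.subset_closure (by simp)) _, ?_⟩
    simp only [coe_sanovA_zpow_mul, Matrix.of_apply, Matrix.cons_val', Matrix.cons_val_zero,
      Matrix.cons_val_one, Matrix.empty_val', Matrix.cons_val_fin_one]
    rcases hε with rfl | rfl <;> omega
  · obtain ⟨ε, hε, hdec⟩ := Int.exists_natAbs_add_two_mul_sign_lt (by omega) hlt
    refine ⟨sanovB ^ ε, zpow_mem (Subgroup.subset_closure (by simp)) _, ?_⟩
    simp only [coe_sanovB_zpow_mul, Matrix.of_apply, Matrix.cons_val', Matrix.cons_val_zero,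
      Matrix.cons_val_one, Matrix.empty_val', Matrix.cons_val_fin_one]
    rcases hε with rfl | rfl <;> omega

lemma Gamma_four_le_closure_sanov :
    CongruenceSubgroup.Gamma 4 ≤ Subgroup.closure {sanovA, sanovB} := by
  intro g hg
  obtain ⟨h00, h01, h10, -⟩ := CongruenceSubgroup.Gamma_mem.1 hg
  have h00' := (ZMod.intCast_eq_intCast_iff' (g 0 0) 1 4).1 (by simpa using h00)
  rw [ZMod.intCast_zmod_eq_zero_iff_dvd] at h01 h10
  exact mem_closure_sanov_of_emod (by simpa using h00') (by omega) (by omega)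

theorem stmt18 :
    Function.Injective
      ⇑(FreeGroup.lift (fun i : Bool => if i then sanovA else sanovB)) ∧
    (Subgroup.closure {sanovA, sanovB}).FiniteIndex ∧
    MonoidHom.range (FreeGroup.lift (fun i : Bool => if i then sanovA else sanovB)) =
      Subgroup.closure {sanovA, sanovB} := by
  have hgen : (fun i : Bool => if i then sanovA else sanovB) =
      fun i => if i then T ^ (2 : ℤ) else S⁻¹ * T ^ (-2 : ℤ) * S := by
    rw [sanovA_eq_T_zpow, sanovB_eq_conj_T_zpow]
  refine ⟨hgen ▸ injective_lift_T_zpow_conj 2 (by norm_num),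
    Subgroup.finiteIndex_of_le Gamma_four_le_closure_sanov, ?_⟩
  rw [FreeGroup.range_lift_eq_closure]
  congr 1
  ext
  simp [or_comm]
end
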